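/- arXiv:2011.01356 — 2 statements merged into one kernel-verified Lean document; each statement's English description precedes it below -/
import Mathlib

section
/- Let b ∈ C with q(b) ≠ 0. For every type-0 vertex lattice Λ₀: if Λ₀ = Λ_b then n(b,Λ₀) = ord_{π₀}(q(b)); otherwise n(b,Λ₀) = ord_{π₀}(q(b)) − 1 − min{d_G(P,Q) : P a type-2 vertex lattice containing Λ₀, Q a type-2 vertex lattice containing Λ_b}. -/
noncomputable section

attribute [local instance] Classical.propDecidable

variable {F : Type} [Field F]

/-- Membership in the valuation ring `O_F = {x : F | x = 0 ∨ v x ≥ 0}`. -/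
def inO (v : F → ℤ) (x : F) : Prop := x = 0 ∨ 0 ≤ v x

/-- The Hermitian form `h(x, y) = x₁ · σ(y₂) + x₂ · σ(y₁)` on `C = F²`. -/
def herm (σ : F →+* F) (x y : F × F) : F := x.1 * σ y.2 + x.2 * σ y.1

/-- The `O_F`-span of two vectors of `C = F²`. -/
def spanL (v : F → ℤ) (u w : F × F) : Set (F × F) :=
  {x | ∃ a b : F, inO v a ∧ inO v b ∧ x = a • u + b • w}

/-- An `O_F`-lattice in `C`: a free rank-2 `O_F`-submodule spanning `C` over `F`. -/
def IsLattice (v : F → ℤ) (Λ : Set (F × F)) : Prop :=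
  ∃ u w : F × F, LinearIndependent F ![u, w] ∧ Λ = spanL v u w

/-- The dual lattice `Λ^♯ = {x ∈ C | h(x, Λ) ⊆ O_F}`. -/
def dualL (σ : F →+* F) (v : F → ℤ) (Λ : Set (F × F)) : Set (F × F) :=
  {x | ∀ y ∈ Λ, inO v (herm σ x y)}

/-- A vertex lattice of type 0: a self-dual lattice. -/
def IsVertex0 (σ : F →+* F) (v : F → ℤ) (Λ : Set (F × F)) : Prop :=
  IsLattice v Λ ∧ dualL σ v Λ = Λ

/-- A vertex lattice of type 2: a lattice with `Λ^♯ = π Λ`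
(equivalently `πΛ ⊆ Λ^♯ ⊆ Λ` with `Λ/Λ^♯` two-dimensional over the residue field). -/
def IsVertex2 (σ : F →+* F) (π : F) (v : F → ℤ) (Λ : Set (F × F)) : Prop :=
  IsLattice v Λ ∧ dualL σ v Λ = (fun x => π • x) '' Λ

/-- A vertex lattice (of type 0 or type 2). -/
def IsVertex (σ : F →+* F) (π : F) (v : F → ℤ) (Λ : Set (F × F)) : Prop :=
  IsVertex0 σ v Λ ∨ IsVertex2 σ π v Λ

/-- `nIs π b Λ n` says that `n = n(b, Λ)` is the largest integer `m` with `π⁻ᵐ b ∈ Λ`. -/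
def nIs (π : F) (b : F × F) (Λ : Set (F × F)) (n : ℤ) : Prop :=
  IsGreatest {m : ℤ | (π ^ (-m)) • b ∈ Λ} n

/-- Adjacency of type-2 vertex lattices: distinct, with intersection a type-0 vertex lattice. -/
def AdjV (σ : F →+* F) (π : F) (v : F → ℤ) (Λ Λ' : Set (F × F)) : Prop :=
  IsVertex2 σ π v Λ ∧ IsVertex2 σ π v Λ' ∧ Λ ≠ Λ' ∧ IsVertex0 σ v (Λ ∩ Λ')

/-- There is a walk of length `k` between `Λ` and `Λ'` in the Bruhat–Tits tree. -/
def WalkN (σ : F →+* F) (π : F) (v : F → ℤ) (k : ℕ) (Λ Λ' : Set (F × F)) : Prop :=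
  ∃ f : ℕ → Set (F × F), f 0 = Λ ∧ f k = Λ' ∧ ∀ i < k, AdjV σ π v (f i) (f (i + 1))

/-- `dGIs σ π v Λ Λ' k` : the graph distance `d_G(Λ, Λ')` equals `k`. -/
def dGIs (σ : F →+* F) (π : F) (v : F → ℤ) (Λ Λ' : Set (F × F)) (k : ℕ) : Prop :=
  IsLeast {j : ℕ | WalkN σ π v j Λ Λ'} k

/-- `P` is a type-2 "hull" of the vertex lattice `Λ`: `P = Λ` when `Λ` has type 2,
and `P` is a type-2 vertex lattice containing `Λ` when `Λ` has type 0. -/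
def HullOf (σ : F →+* F) (π : F) (v : F → ℤ) (Λ P : Set (F × F)) : Prop :=
  (IsVertex2 σ π v Λ ∧ P = Λ) ∨ (IsVertex0 σ v Λ ∧ IsVertex2 σ π v P ∧ Λ ⊆ P)

/-- `DTwice σ π v Λ Λ' m` : twice the tree distance `D(Λ, Λ')` equals `m`
(type-0 vertex lattices are midpoints of edges, contributing `1/2` each). -/
def DTwice (σ : F →+* F) (π : F) (v : F → ℤ) (Λ Λ' : Set (F × F)) (m : ℕ) : Prop :=
  (Λ = Λ' ∧ m = 0) ∨
  (Λ ≠ Λ' ∧ ∃ k : ℕ,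
    IsLeast {j : ℕ | ∃ P Q, HullOf σ π v Λ P ∧ HullOf σ π v Λ' Q ∧ WalkN σ π v j P Q} k ∧
    (m : ℤ) = 2 * k + (if IsVertex0 σ v Λ then 1 else 0) +
      (if IsVertex0 σ v Λ' then 1 else 0))

/-- `g ∈ GL₂(O_F)`. -/
def InGL2O (v : F → ℤ) (g : Matrix (Fin 2) (Fin 2) F) : Prop :=
  (∀ i j, inO v (g i j)) ∧
    ∃ g' : Matrix (Fin 2) (Fin 2) F, (∀ i j, inO v (g' i j)) ∧ g * g' = 1 ∧ g' * g = 1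

/-- Equivalence of Hermitian matrices: `T ≈ T'` iff `gᵗ T ḡ = T'` for some `g ∈ GL₂(O_F)`. -/
def HermEquiv (σ : F →+* F) (v : F → ℤ) (T T' : Matrix (Fin 2) (Fin 2) F) : Prop :=
  ∃ g, InGL2O v g ∧ g.transpose * T * g.map (fun x => σ x) = T'

/-- `u` is a unit of `O_{F₀}`. -/
def IsUnitO₀ (σ : F →+* F) (v : F → ℤ) (u : F) : Prop :=
  σ u = u ∧ u ≠ 0 ∧ v u = 0

/-- `x` is a norm from `F^×`. -/
def IsNorm (σ : F →+* F) (x : F) : Prop := ∃ y : F, y ≠ 0 ∧ x = y * σ y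

namespace SKAux

variable {σ : F →+* F} {π : F} {v : F → ℤ}

structure Ax (σ : F →+* F) (π : F) (v : F → ℤ) : Prop where
  hinv : ∀ x, σ (σ x) = x
  hpi : π ≠ 0
  hvpi : v π = 1
  hvs : ∀ x, v (σ x) = v x
  hvm : ∀ x y : F, x ≠ 0 → y ≠ 0 → v (x * y) = v x + v y
  hva : ∀ x y : F, x ≠ 0 → y ≠ 0 → x + y ≠ 0 → min (v x) (v y) ≤ v (x + y)

/-- `x = 0` or `v x ≥ n`. -/
def vge (v : F → ℤ) (n : ℤ) (x : F) : Prop := x = 0 ∨ n ≤ v x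

theorem v_one (hP : Ax σ π v) : v (1 : F) = 0 := by
  have h := hP.hvm 1 1 one_ne_zero one_ne_zero
  rw [mul_one] at h; omega

theorem v_neg_one (hP : Ax σ π v) : v (-1 : F) = 0 := by
  have h := hP.hvm (-1) (-1) (by norm_num) (by norm_num)
  rw [neg_mul_neg, one_mul, v_one hP] at h; omega

theorem v_neg (hP : Ax σ π v) (x : F) (hx : x ≠ 0) : v (-x) = v x := by
  have h := hP.hvm (-1) x (by norm_num) hx
  rw [neg_one_mul] at h
  rw [h, v_neg_one hP]; omega

theorem v_inv (hP : Ax σ π v) {x : F} (hx : x ≠ 0) : v x⁻¹ = - v x := by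
  have h := hP.hvm x⁻¹ x (inv_ne_zero hx) hx
  rw [inv_mul_cancel₀ hx, v_one hP] at h; omega

theorem v_zpow (hP : Ax σ π v) (k : ℤ) : v (π ^ k) = k := by
  have hnat : ∀ n : ℕ, v (π ^ (n : ℕ)) = n := by
    intro n; induction n with
    | zero => simpa using v_one hP
    | succ n ih =>
      rw [pow_succ, hP.hvm _ _ (pow_ne_zero _ hP.hpi) hP.hpi, ih, hP.hvpi]
      push_cast; ring
  obtain ⟨n, rfl | rfl⟩ := k.eq_nat_or_neg
  · rw [zpow_natCast, hnat]
  · rw [zpow_neg, v_inv hP (zpow_ne_zero _ hP.hpi), zpow_natCast, hnat]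

theorem zpow_ne (hP : Ax σ π v) (k : ℤ) : π ^ k ≠ 0 := zpow_ne_zero _ hP.hpi

theorem sigma_ne (hP : Ax σ π v) {x : F} (hx : x ≠ 0) : σ x ≠ 0 := by
  intro h; apply hx
  have h2 := hP.hinv x; rw [h, map_zero] at h2; exact h2.symm

theorem vge_zero (n : ℤ) : vge v n (0 : F) := Or.inl rfl

theorem vge_mono {m n : ℤ} {x : F} (h : m ≤ n) : vge v n x → vge v m x :=
  fun h' => h'.imp id (fun hh => le_trans h hh)

theorem vge_add (hP : Ax σ π v) {n : ℤ} {x y : F} (hx : vge v n x) (hy : vge v n y) :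
    vge v n (x + y) := by
  by_cases hx0 : x = 0
  · subst hx0; simpa using hy
  by_cases hy0 : y = 0
  · subst hy0; simpa using hx
  by_cases hxy : x + y = 0
  · exact Or.inl hxy
  · exact Or.inr (le_trans (le_min (hx.resolve_left hx0) (hy.resolve_left hy0))
      (hP.hva x y hx0 hy0 hxy))

theorem vge_mul (hP : Ax σ π v) {m n : ℤ} {x y : F} (hx : vge v m x) (hy : vge v n y) :
    vge v (m + n) (x * y) := by
  by_cases hx0 : x = 0
  · subst hx0; exact Or.inl (zero_mul y)
  by_cases hy0 : y = 0
  · subst hy0; exact Or.inl (mul_zero x)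
  exact Or.inr (by rw [hP.hvm x y hx0 hy0]
                   exact add_le_add (hx.resolve_left hx0) (hy.resolve_left hy0))

theorem vge_neg (hP : Ax σ π v) {n : ℤ} {x : F} (hx : vge v n x) : vge v n (-x) := by
  by_cases h0 : x = 0
  · subst h0; rw [neg_zero]; exact vge_zero n
  · exact Or.inr (by rw [v_neg hP x h0]; exact hx.resolve_left h0)

theorem vge_sub (hP : Ax σ π v) {n : ℤ} {x y : F} (hx : vge v n x) (hy : vge v n y) :
    vge v n (x - y) := by
  rw [sub_eq_add_neg]; exact vge_add hP hx (vge_neg hP hy)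

theorem vge_sigma (hP : Ax σ π v) {n : ℤ} {x : F} (hx : vge v n x) : vge v n (σ x) := by
  by_cases h0 : x = 0
  · subst h0; exact Or.inl (map_zero σ)
  · exact Or.inr (by rw [hP.hvs]; exact hx.resolve_left h0)

theorem vge_zpow (hP : Ax σ π v) (k : ℤ) : vge v k (π ^ k) :=
  Or.inr (le_of_eq (v_zpow hP k).symm)

theorem vge_one (hP : Ax σ π v) : vge v 0 (1 : F) :=
  Or.inr (le_of_eq (v_one hP).symm)

theorem not_vge {n : ℤ} {x : F} : ¬ vge v n x ↔ x ≠ 0 ∧ v x < n := by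
  constructor
  · intro h
    refine ⟨fun h0 => h (Or.inl h0), ?_⟩
    by_contra hle
    exact h (Or.inr (not_lt.mp hle))
  · rintro ⟨h0, hlt⟩ (rfl | hle)
    · exact h0 rfl
    · omega

theorem vge_mul_cancel (hP : Ax σ π v) {c x : F} {n : ℤ} (hc : c ≠ 0) (h : vge v n (c * x)) :
    vge v (n - v c) x := by
  by_cases h0 : x = 0
  · exact Or.inl h0
  rcases h with h | hle
  · exact absurd h (mul_ne_zero hc h0)
  · exact Or.inr (by rw [hP.hvm c x hc h0] at hle; omega)

end SKAux
namespace SKAux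

variable {σ : F →+* F} {π : F} {v : F → ℤ}

/-- determinant of a pair of vectors -/
def dd (x y : F × F) : F := x.1 * y.2 - x.2 * y.1

/-- first coordinate of `x` with respect to the basis `u, w` -/
def sC (u w x : F × F) : F := (x.1 * w.2 - x.2 * w.1) / dd u w

/-- second coordinate of `x` with respect to the basis `u, w` -/
def tC (u w x : F × F) : F := (u.1 * x.2 - u.2 * x.1) / dd u w

theorem dd_scale (c e : F) (x y : F × F) : dd (c • x) (e • y) = c * e * dd x y := by
  simp only [dd, Prod.smul_fst, Prod.smul_snd, smul_eq_mul]; ring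

theorem dd_comm (x y : F × F) : dd x y = - dd y x := by simp only [dd]; ring

theorem dd_colop (c : F) (x y : F × F) : dd x (y + c • x) = dd x y := by
  simp only [dd, Prod.fst_add, Prod.snd_add, Prod.smul_fst, Prod.smul_snd, smul_eq_mul]; ring

theorem dd_rowop (c : F) (x y : F × F) : dd (x + c • y) y = dd x y := by
  simp only [dd, Prod.fst_add, Prod.snd_add, Prod.smul_fst, Prod.smul_snd, smul_eq_mul]; ring

theorem linIndep_iff (u w : F × F) : LinearIndependent F ![u, w] ↔ dd u w ≠ 0 := by
  rw [linearIndependent_fin2]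
  simp only [Matrix.cons_val_one, Matrix.head_cons, Matrix.cons_val_zero, ne_eq]
  constructor
  · rintro ⟨hw, h⟩ hdd
    by_cases hw1 : w.1 = 0
    · have hw2 : w.2 ≠ 0 := by
        intro h2; exact hw (Prod.ext_iff.mpr ⟨by simpa using hw1, by simpa using h2⟩)
      have hu1 : u.1 = 0 := by
        have : u.1 * w.2 = 0 := by
          have := hdd; simp only [dd, hw1, mul_zero, sub_zero] at this; exact this
        rcases mul_eq_zero.mp this with h | h
        · exact h
        · exact absurd h hw2
      apply h (u.2 / w.2)
      apply Prod.ext_iff.mpr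
      constructor
      · simp [Prod.smul_fst, smul_eq_mul, hw1, hu1]
      · simp only [Prod.smul_snd, smul_eq_mul]
        field_simp
    · apply h (u.1 / w.1)
      apply Prod.ext_iff.mpr
      constructor
      · simp only [Prod.smul_fst, smul_eq_mul]; field_simp
      · simp only [Prod.smul_snd, smul_eq_mul]
        have hd' : u.1 * w.2 - u.2 * w.1 = 0 := hdd
        field_simp
        linear_combination hd'
  · intro hdd
    constructor
    · intro h0
      apply hdd; subst h0; simp [dd]
    · intro a ha
      apply hdd
      rw [← ha]
      simp only [dd, Prod.smul_fst, Prod.smul_snd, smul_eq_mul]; ring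

theorem rep {u w : F × F} (hd : dd u w ≠ 0) (x : F × F) :
    x = sC u w x • u + tC u w x • w := by
  have hd' : u.1 * w.2 - u.2 * w.1 ≠ 0 := hd
  apply Prod.ext_iff.mpr
  constructor
  · simp only [Prod.fst_add, Prod.smul_fst, smul_eq_mul, sC, tC, dd]
    rw [div_mul_eq_mul_div, div_mul_eq_mul_div, ← add_div, eq_div_iff hd']; ring
  · simp only [Prod.snd_add, Prod.smul_snd, smul_eq_mul, sC, tC, dd]
    rw [div_mul_eq_mul_div, div_mul_eq_mul_div, ← add_div, eq_div_iff hd']; ring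

theorem uniq {u w : F × F} (hd : dd u w ≠ 0) {a b a' b' : F}
    (h : a • u + b • w = a' • u + b' • w) : a = a' ∧ b = b' := by
  have h1 : a * u.1 + b * w.1 = a' * u.1 + b' * w.1 := by
    have := congrArg Prod.fst h
    simpa [Prod.fst_add, Prod.smul_fst, smul_eq_mul] using this
  have h2 : a * u.2 + b * w.2 = a' * u.2 + b' * w.2 := by
    have := congrArg Prod.snd h
    simpa [Prod.snd_add, Prod.smul_snd, smul_eq_mul] using this
  constructor
  · have e : (a - a') * dd u w = 0 := by
      simp only [dd]; linear_combination w.2 * h1 - w.1 * h2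
    have := (mul_eq_zero.mp e).resolve_right hd
    exact sub_eq_zero.mp this
  · have e : (b - b') * dd u w = 0 := by
      simp only [dd]; linear_combination u.1 * h2 - u.2 * h1
    have := (mul_eq_zero.mp e).resolve_right hd
    exact sub_eq_zero.mp this

theorem sC_comb {u w : F × F} (hd : dd u w ≠ 0) (a b : F) : sC u w (a • u + b • w) = a :=
  ((uniq hd (rep hd (a • u + b • w)).symm).1)

theorem tC_comb {u w : F × F} (hd : dd u w ≠ 0) (a b : F) : tC u w (a • u + b • w) = b :=
  ((uniq hd (rep hd (a • u + b • w)).symm).2)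

theorem sC_smul (u w : F × F) (c : F) (x : F × F) : sC u w (c • x) = c * sC u w x := by
  simp only [sC, Prod.smul_fst, Prod.smul_snd, smul_eq_mul]; ring

theorem tC_smul (u w : F × F) (c : F) (x : F × F) : tC u w (c • x) = c * tC u w x := by
  simp only [tC, Prod.smul_fst, Prod.smul_snd, smul_eq_mul]; ring

end SKAux
namespace SKAux

variable {σ : F →+* F} {π : F} {v : F → ℤ}

theorem mem_span_left (hP : Ax σ π v) (x y : F × F) : x ∈ spanL v x y :=
  ⟨1, 0, vge_one hP, vge_zero 0, by simp⟩

theorem mem_span_right (hP : Ax σ π v) (x y : F × F) : y ∈ spanL v x y :=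
  ⟨0, 1, vge_zero 0, vge_one hP, by simp⟩

theorem mem_span_scaled (hP : Ax σ π v) {u w : F × F} (hd : dd u w ≠ 0) (j k : ℤ) (x : F × F) :
    x ∈ spanL v ((π ^ j) • u) ((π ^ k) • w) ↔ vge v j (sC u w x) ∧ vge v k (tC u w x) := by
  constructor
  · rintro ⟨a, b, ha, hb, hx⟩
    rw [smul_smul, smul_smul] at hx
    have hsc : sC u w x = a * π ^ j := by rw [hx]; exact sC_comb hd _ _
    have htc : tC u w x = b * π ^ k := by rw [hx]; exact tC_comb hd _ _
    constructor
    · rw [hsc]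
      have := vge_mul hP (ha : vge v 0 a) (vge_zpow hP j); rwa [zero_add] at this
    · rw [htc]
      have := vge_mul hP (hb : vge v 0 b) (vge_zpow hP k); rwa [zero_add] at this
  · rintro ⟨hs, ht⟩
    refine ⟨sC u w x * π ^ (-j), tC u w x * π ^ (-k), ?_, ?_, ?_⟩
    · have := vge_mul hP hs (vge_zpow hP (-j)); rwa [add_neg_cancel] at this
    · have := vge_mul hP ht (vge_zpow hP (-k)); rwa [add_neg_cancel] at this
    · rw [smul_smul, smul_smul]
      simp only [mul_assoc, ← zpow_add₀ hP.hpi, neg_add_cancel, zpow_zero, mul_one]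
      exact rep hd x

theorem mem_span_iff (hP : Ax σ π v) {u w : F × F} (hd : dd u w ≠ 0) (x : F × F) :
    x ∈ spanL v u w ↔ vge v 0 (sC u w x) ∧ vge v 0 (tC u w x) := by
  have h := mem_span_scaled hP hd 0 0 x
  simpa [zpow_zero, one_smul] using h

theorem span_comm (u' w' : F × F) : spanL v u' w' = spanL v w' u' := by
  ext z
  constructor <;> rintro ⟨a, b, ha, hb, rfl⟩ <;> exact ⟨b, a, hb, ha, add_comm _ _⟩

theorem span_smul_mem (hP : Ax σ π v) {c : F} (hc : inO v c) {x y z : F × F}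
    (hz : z ∈ spanL v x y) : c • z ∈ spanL v x y := by
  obtain ⟨a, b, ha, hb, rfl⟩ := hz
  refine ⟨c * a, c * b, ?_, ?_, by rw [smul_add, smul_smul, smul_smul]⟩
  · have := vge_mul hP (hc : vge v 0 c) (ha : vge v 0 a); rwa [add_zero] at this
  · have := vge_mul hP (hc : vge v 0 c) (hb : vge v 0 b); rwa [add_zero] at this

theorem span_colop (hP : Ax σ π v) {c : F} (hc : inO v c) (x y : F × F) :
    spanL v x y = spanL v x (y + c • x) := by
  ext z
  constructor
  · rintro ⟨a, b, ha, hb, rfl⟩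
    refine ⟨a - b * c, b, vge_sub hP ha ?_, hb, ?_⟩
    · have := vge_mul hP (hb : vge v 0 b) (hc : vge v 0 c); rwa [add_zero] at this
    · rw [smul_add, smul_smul, sub_smul]; abel
  · rintro ⟨a, b, ha, hb, rfl⟩
    refine ⟨a + b * c, b, vge_add hP ha ?_, hb, ?_⟩
    · have := vge_mul hP (hb : vge v 0 b) (hc : vge v 0 c); rwa [add_zero] at this
    · rw [smul_add, smul_smul, add_smul]; abel

theorem span_rowop (hP : Ax σ π v) {c : F} (hc : inO v c) (x y : F × F) :
    spanL v x y = spanL v (x + c • y) y := by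
  rw [span_comm, span_colop hP hc, span_comm]

theorem span_unitL (hP : Ax σ π v) {e : F} (he : e ≠ 0) (hv : v e = 0) (x y : F × F) :
    spanL v (e • x) y = spanL v x y := by
  ext z
  constructor
  · rintro ⟨a, b, ha, hb, rfl⟩
    refine ⟨a * e, b, ?_, hb, by rw [smul_smul]⟩
    have := vge_mul hP (ha : vge v 0 a) (Or.inr hv.ge : vge v 0 e); rwa [add_zero] at this
  · rintro ⟨a, b, ha, hb, rfl⟩
    refine ⟨a * e⁻¹, b, ?_, hb, by rw [smul_smul, mul_assoc, inv_mul_cancel₀ he, mul_one]⟩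
    have h1 : vge v 0 (e⁻¹ : F) := Or.inr (by rw [v_inv hP he, hv]; omega)
    have := vge_mul hP (ha : vge v 0 a) h1; rwa [add_zero] at this

theorem span_unitR (hP : Ax σ π v) {e : F} (he : e ≠ 0) (hv : v e = 0) (x y : F × F) :
    spanL v x (e • y) = spanL v x y := by
  rw [span_comm, span_unitL hP he hv, span_comm]

theorem image_pi_span (x y : F × F) :
    (fun z => π • z) '' spanL v x y = spanL v (π • x) (π • y) := by
  ext z
  constructor
  · rintro ⟨z', ⟨a, b, ha, hb, rfl⟩, rfl⟩
    refine ⟨a, b, ha, hb, ?_⟩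
    simp only
    rw [smul_add, smul_smul, smul_smul, smul_smul, smul_smul, mul_comm a π, mul_comm b π]
  · rintro ⟨a, b, ha, hb, rfl⟩
    refine ⟨a • x + b • y, ⟨a, b, ha, hb, rfl⟩, ?_⟩
    simp only
    rw [smul_add, smul_smul, smul_smul, smul_smul, smul_smul, mul_comm π a, mul_comm π b]

theorem herm_smul2 (c d : F) (x y : F × F) :
    herm σ (c • x) (d • y) = c * σ d * herm σ x y := by
  simp only [herm, Prod.smul_fst, Prod.smul_snd, smul_eq_mul, map_mul]; ring

theorem herm_left (s t : F) (u w y : F × F) :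
    herm σ (s • u + t • w) y = s * herm σ u y + t * herm σ w y := by
  simp only [herm, Prod.fst_add, Prod.snd_add, Prod.smul_fst, Prod.smul_snd, smul_eq_mul]; ring

theorem herm_right (s t : F) (y u w : F × F) :
    herm σ y (s • u + t • w) = σ s * herm σ y u + σ t * herm σ y w := by
  simp only [herm, Prod.fst_add, Prod.snd_add, Prod.smul_fst, Prod.smul_snd, smul_eq_mul,
    map_add, map_mul]; ring

theorem herm_conj (hP : Ax σ π v) (x y : F × F) : herm σ y x = σ (herm σ x y) := by
  simp only [herm, map_add, map_mul, hP.hinv]; ring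

theorem herm_comb (s t s' t' : F) (u w : F × F) :
    herm σ (s • u + t • w) (s' • u + t' • w) =
      s * σ s' * herm σ u u + s * σ t' * herm σ u w + t * σ s' * herm σ w u
        + t * σ t' * herm σ w w := by
  simp only [herm, Prod.fst_add, Prod.snd_add, Prod.smul_fst, Prod.smul_snd, smul_eq_mul,
    map_add, map_mul]; ring

theorem mem_dual_iff (hP : Ax σ π v) (x y z : F × F) :
    z ∈ dualL σ v (spanL v x y) ↔ inO v (herm σ z x) ∧ inO v (herm σ z y) := by
  constructor
  · intro h
    exact ⟨h x (mem_span_left hP x y), h y (mem_span_right hP x y)⟩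
  · rintro ⟨h1, h2⟩ y' ⟨a, b, ha, hb, rfl⟩
    rw [herm_right]
    have t1 := vge_mul hP (vge_sigma hP (ha : vge v 0 a)) (h1 : vge v 0 _)
    have t2 := vge_mul hP (vge_sigma hP (hb : vge v 0 b)) (h2 : vge v 0 _)
    rw [add_zero] at t1 t2
    exact vge_add hP t1 t2

theorem dual_anti {s t : Set (F × F)} (h : s ⊆ t) : dualL σ v t ⊆ dualL σ v s :=
  fun z hz y hy => hz y (h hy)

theorem gram_det (hP : Ax σ π v) (x y : F × F) :
    herm σ x x * herm σ y y - herm σ x y * σ (herm σ x y) = -(dd x y * σ (dd x y)) := by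
  simp only [herm, dd, map_add, map_mul, map_sub, hP.hinv]; ring

end SKAux
namespace SKAux

variable {σ : F →+* F} {π : F} {v : F → ℤ}

theorem dual_span (hP : Ax σ π v) {u w : F × F} (hd : dd u w ≠ 0) (k : ℤ)
    (hA : vge v (-k) (herm σ u u)) (hB : vge v (-k) (herm σ u w))
    (hD : vge v (-k) (herm σ w w)) (hvd : v (dd u w) = -k) :
    dualL σ v (spanL v u w) = spanL v ((π ^ k) • u) ((π ^ k) • w) := by
  have hσd : σ (dd u w) ≠ 0 := sigma_ne hP hd
  have hDne : herm σ u u * herm σ w w - herm σ u w * σ (herm σ u w) ≠ 0 := by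
    rw [gram_det hP]; exact neg_ne_zero.mpr (mul_ne_zero hd hσd)
  have hvD : v (herm σ u u * herm σ w w - herm σ u w * σ (herm σ u w)) = -k + -k := by
    rw [gram_det hP, v_neg hP _ (mul_ne_zero hd hσd), hP.hvm _ _ hd hσd, hP.hvs, hvd]
  ext z
  rw [mem_dual_iff hP, mem_span_scaled hP hd]
  have hzu : herm σ z u = sC u w z * herm σ u u + tC u w z * σ (herm σ u w) := by
    conv_lhs => rw [rep hd z]
    rw [herm_left, herm_conj hP u w]
  have hzw : herm σ z w = sC u w z * herm σ u w + tC u w z * herm σ w w := by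
    conv_lhs => rw [rep hd z]
    rw [herm_left]
  constructor
  · rintro ⟨h1, h2⟩
    constructor
    · by_cases hs0 : sC u w z = 0
      · exact Or.inl hs0
      have hkey : sC u w z * (herm σ u u * herm σ w w - herm σ u w * σ (herm σ u w))
          = herm σ z u * herm σ w w - herm σ z w * σ (herm σ u w) := by
        rw [hzu, hzw]; ring
      have hv1 : vge v (0 + -k) (herm σ z u * herm σ w w) :=
        vge_mul hP (h1 : vge v 0 _) hD
      have hv2 : vge v (0 + -k) (herm σ z w * σ (herm σ u w)) :=
        vge_mul hP (h2 : vge v 0 _) (vge_sigma hP hB)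
      have hv3 : vge v (0 + -k) (sC u w z * _) := hkey ▸ vge_sub hP hv1 hv2
      rcases hv3 with h0 | hle
      · exact absurd h0 (mul_ne_zero hs0 hDne)
      · refine Or.inr ?_
        rw [hP.hvm _ _ hs0 hDne, hvD] at hle; omega
    · by_cases ht0 : tC u w z = 0
      · exact Or.inl ht0
      have hkey : tC u w z * (herm σ u u * herm σ w w - herm σ u w * σ (herm σ u w))
          = herm σ z w * herm σ u u - herm σ z u * herm σ u w := by
        rw [hzu, hzw]; ring
      have hv1 : vge v (0 + -k) (herm σ z w * herm σ u u) :=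
        vge_mul hP (h2 : vge v 0 _) hA
      have hv2 : vge v (0 + -k) (herm σ z u * herm σ u w) :=
        vge_mul hP (h1 : vge v 0 _) hB
      have hv3 : vge v (0 + -k) (tC u w z * _) := hkey ▸ vge_sub hP hv1 hv2
      rcases hv3 with h0 | hle
      · exact absurd h0 (mul_ne_zero ht0 hDne)
      · refine Or.inr ?_
        rw [hP.hvm _ _ ht0 hDne, hvD] at hle; omega
  · rintro ⟨hs, ht⟩
    constructor
    · rw [hzu]
      refine vge_add hP ?_ ?_
      · have := vge_mul hP hs hA; rwa [add_neg_cancel] at this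
      · have := vge_mul hP ht (vge_sigma hP hB); rwa [add_neg_cancel] at this
    · rw [hzw]
      refine vge_add hP ?_ ?_
      · have := vge_mul hP hs hB; rwa [add_neg_cancel] at this
      · have := vge_mul hP ht hD; rwa [add_neg_cancel] at this

theorem selfdual_gram (hP : Ax σ π v) {u w : F × F} (hd : dd u w ≠ 0)
    (hsd : dualL σ v (spanL v u w) = spanL v u w) :
    vge v 0 (herm σ u u) ∧ vge v 0 (herm σ u w) ∧ vge v 0 (herm σ w w) ∧ v (dd u w) = 0 := by
  have hu : u ∈ dualL σ v (spanL v u w) := by rw [hsd]; exact mem_span_left hP u w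
  have hw : w ∈ dualL σ v (spanL v u w) := by rw [hsd]; exact mem_span_right hP u w
  obtain ⟨hA, hB⟩ := (mem_dual_iff hP u w u).mp hu
  obtain ⟨hBu, hΔ⟩ := (mem_dual_iff hP u w w).mp hw
  refine ⟨hA, hB, hΔ, ?_⟩
  have hσd : σ (dd u w) ≠ 0 := sigma_ne hP hd
  have hDne : herm σ u u * herm σ w w - herm σ u w * σ (herm σ u w) ≠ 0 := by
    rw [gram_det hP]; exact neg_ne_zero.mpr (mul_ne_zero hd hσd)
  have hvD : v (herm σ u u * herm σ w w - herm σ u w * σ (herm σ u w))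
      = v (dd u w) + v (dd u w) := by
    rw [gram_det hP, v_neg hP _ (mul_ne_zero hd hσd), hP.hvm _ _ hd hσd, hP.hvs]
  have hDge : vge v 0 (herm σ u u * herm σ w w - herm σ u w * σ (herm σ u w)) := by
    have h1 := vge_mul hP (hA : vge v 0 _) (hΔ : vge v 0 _)
    have h2 := vge_mul hP (hB : vge v 0 _) (vge_sigma hP (hB : vge v 0 _))
    rw [add_zero] at h1 h2
    exact vge_sub hP h1 h2
  set D := herm σ u u * herm σ w w - herm σ u w * σ (herm σ u w) with hDdef
  -- first dual basis vector
  have hx1 : herm σ w w / D * herm σ u u + (-(herm σ u w / D)) * σ (herm σ u w) = 1 := by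
    field_simp
    rw [hDdef]; ring
  have hx2 : herm σ w w / D * herm σ u w + (-(herm σ u w / D)) * herm σ w w = 0 := by
    ring
  have hxdual : ((herm σ w w / D) • u + (-(herm σ u w / D)) • w) ∈ dualL σ v (spanL v u w) := by
    rw [mem_dual_iff hP]
    constructor
    · rw [herm_left, herm_conj hP u w, hx1]; exact vge_one hP
    · rw [herm_left, hx2]; exact vge_zero 0
  rw [hsd] at hxdual
  obtain ⟨a, b, ha, hb, heq⟩ := hxdual
  obtain ⟨ha', hb'⟩ := uniq hd heq
  have hΔD : vge v 0 (herm σ w w / D) := ha' ▸ (ha : vge v 0 a)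
  have hBD : vge v 0 (herm σ u w / D) := by
    have h := vge_neg hP (hb' ▸ (hb : vge v 0 b))
    rwa [neg_neg] at h
  -- second dual basis vector
  have hy1 : (-(σ (herm σ u w) / D)) * herm σ u u + herm σ u u / D * σ (herm σ u w) = 0 := by
    ring
  have hy2 : (-(σ (herm σ u w) / D)) * herm σ u w + herm σ u u / D * herm σ w w = 1 := by
    field_simp
    rw [hDdef]; ring
  have hydual : ((-(σ (herm σ u w) / D)) • u + (herm σ u u / D) • w)
      ∈ dualL σ v (spanL v u w) := by
    rw [mem_dual_iff hP]
    constructor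
    · rw [herm_left, herm_conj hP u w, hy1]; exact vge_zero 0
    · rw [herm_left, hy2]; exact vge_one hP
  rw [hsd] at hydual
  obtain ⟨a2, b2, ha2, hb2, heq2⟩ := hydual
  obtain ⟨ha2', hb2'⟩ := uniq hd heq2
  have hAD : vge v 0 (herm σ u u / D) := hb2' ▸ (hb2 : vge v 0 b2)
  have hσBD : vge v 0 (σ (herm σ u w) / D) := by
    have h := vge_neg hP (ha2' ▸ (ha2 : vge v 0 a2))
    rwa [neg_neg] at h
  have hfin : herm σ u u / D * (herm σ w w / D) - herm σ u w / D * (σ (herm σ u w) / D)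
      = D⁻¹ := by
    rw [div_mul_div_comm, div_mul_div_comm, div_sub_div_same, ← hDdef,
      div_mul_cancel_left₀ hDne]
  have hDinv : vge v 0 (D⁻¹) := by
    have h1 := vge_mul hP hAD hΔD
    have h2 := vge_mul hP hBD hσBD
    rw [add_zero] at h1 h2
    exact hfin ▸ vge_sub hP h1 h2
  have hvinv : v (D⁻¹) = - v D := v_inv hP hDne
  have h1 : 0 ≤ v D := (hDge.resolve_left hDne)
  have h2 : 0 ≤ v (D⁻¹) := (hDinv.resolve_left (inv_ne_zero hDne))
  omega

end SKAux
namespace SKAux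

variable {σ : F →+* F} {π : F} {v : F → ℤ}

theorem vge_pp (hP : Ax σ π v) (j k n : ℤ) {c : F} (h : vge v n c) :
    vge v (j + k + n) (π ^ j * σ (π ^ k) * c) :=
  vge_mul hP (vge_mul hP (vge_zpow hP j) (vge_sigma hP (vge_zpow hP k))) h

theorem vertex2_scaled (hP : Ax σ π v) {u w : F × F} (hd : dd u w ≠ 0)
    (hvdd : v (dd u w) = 0) {r : ℤ}
    (hA : vge v (2 * r) (herm σ u u)) (hB : vge v 0 (herm σ u w))
    (hΔ : vge v 0 (herm σ w w))
    (j k : ℤ) (hjk : j + k = -1) (hjr : -r ≤ j) (hk : 0 ≤ k) :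
    IsVertex2 σ π v (spanL v ((π ^ j) • u) ((π ^ k) • w)) := by
  have hdxy : dd ((π ^ j) • u) ((π ^ k) • w) ≠ 0 := by
    rw [dd_scale]
    exact mul_ne_zero (mul_ne_zero (zpow_ne hP j) (zpow_ne hP k)) hd
  refine ⟨⟨_, _, (linIndep_iff _ _).mpr hdxy, rfl⟩, ?_⟩
  have hAx : vge v (-1) (herm σ ((π ^ j) • u) ((π ^ j) • u)) := by
    rw [herm_smul2]; exact vge_mono (by omega) (vge_pp hP j j (2 * r) hA)
  have hBx : vge v (-1) (herm σ ((π ^ j) • u) ((π ^ k) • w)) := by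
    rw [herm_smul2]; exact vge_mono (by omega) (vge_pp hP j k 0 hB)
  have hΔx : vge v (-1) (herm σ ((π ^ k) • w) ((π ^ k) • w)) := by
    rw [herm_smul2]; exact vge_mono (by omega) (vge_pp hP k k 0 hΔ)
  have hvddx : v (dd ((π ^ j) • u) ((π ^ k) • w)) = -1 := by
    rw [dd_scale, hP.hvm _ _ (mul_ne_zero (zpow_ne hP j) (zpow_ne hP k)) hd,
      hP.hvm _ _ (zpow_ne hP j) (zpow_ne hP k), v_zpow hP, v_zpow hP, hvdd]
    omega
  have hds := dual_span hP hdxy 1 hAx hBx hΔx (by rw [hvddx])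
  rw [zpow_one] at hds
  rw [hds]
  exact (image_pi_span _ _).symm

theorem vertex0_scaled (hP : Ax σ π v) {u w : F × F} (hd : dd u w ≠ 0)
    (hvdd : v (dd u w) = 0) {r : ℤ}
    (hA : vge v (2 * r) (herm σ u u)) (hB : vge v 0 (herm σ u w))
    (hΔ : vge v 0 (herm σ w w))
    (j k : ℤ) (hjk : j + k = 0) (hjr : -r ≤ j) (hk : 0 ≤ k) :
    IsVertex0 σ v (spanL v ((π ^ j) • u) ((π ^ k) • w)) := by
  have hdxy : dd ((π ^ j) • u) ((π ^ k) • w) ≠ 0 := by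
    rw [dd_scale]
    exact mul_ne_zero (mul_ne_zero (zpow_ne hP j) (zpow_ne hP k)) hd
  refine ⟨⟨_, _, (linIndep_iff _ _).mpr hdxy, rfl⟩, ?_⟩
  have hAx : vge v (-0) (herm σ ((π ^ j) • u) ((π ^ j) • u)) := by
    rw [herm_smul2]; exact vge_mono (by omega) (vge_pp hP j j (2 * r) hA)
  have hBx : vge v (-0) (herm σ ((π ^ j) • u) ((π ^ k) • w)) := by
    rw [herm_smul2]; exact vge_mono (by omega) (vge_pp hP j k 0 hB)
  have hΔx : vge v (-0) (herm σ ((π ^ k) • w) ((π ^ k) • w)) := by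
    rw [herm_smul2]; exact vge_mono (by omega) (vge_pp hP k k 0 hΔ)
  have hvddx : v (dd ((π ^ j) • u) ((π ^ k) • w)) = -0 := by
    rw [dd_scale, hP.hvm _ _ (mul_ne_zero (zpow_ne hP j) (zpow_ne hP k)) hd,
      hP.hvm _ _ (zpow_ne hP j) (zpow_ne hP k), v_zpow hP, v_zpow hP, hvdd]
    omega
  have hds := dual_span hP hdxy 0 hAx hBx hΔx hvddx
  simp only [zpow_zero, one_smul] at hds
  exact hds

theorem walk_chain (hP : Ax σ π v) :
    ∀ (j : ℕ) (P Q : Set (F × F)), WalkN σ π v j P Q → ∀ z ∈ Q, (π ^ (j : ℤ)) • z ∈ P := by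
  intro j
  induction j with
  | zero =>
    rintro P Q ⟨f, h0, hk, _⟩ z hz
    have hPQ : P = Q := h0.symm.trans hk
    simp only [Nat.cast_zero, zpow_zero, one_smul]
    rw [hPQ]; exact hz
  | succ j ih =>
    rintro P Q ⟨f, h0, hk, hadj⟩ z hz
    have hw : WalkN σ π v j P (f j) := ⟨f, h0, rfl, fun i hi => hadj i (Nat.lt_succ_of_lt hi)⟩
    have hA := hadj j (Nat.lt_succ_self j)
    have h1 : π • z ∈ f j := by
      have hz' : z ∈ f (j + 1) := by rw [hk]; exact hz
      have himg : π • z ∈ (fun x => π • x) '' f (j + 1) := ⟨z, hz', rfl⟩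
      rw [← hA.2.1.2] at himg
      have hsub : dualL σ v (f (j + 1)) ⊆ f j := by
        intro x hx
        have hx2 := dual_anti (Set.inter_subset_right : f j ∩ f (j + 1) ⊆ f (j + 1)) hx
        rw [hA.2.2.2.2] at hx2
        exact hx2.1
      exact hsub himg
    have h2 := ih P (f j) hw (π • z) h1
    have hc : (((j + 1 : ℕ)) : ℤ) = (j : ℤ) + 1 := by push_cast; ring
    rw [hc, zpow_add₀ hP.hpi, zpow_one, mul_smul]
    exact h2

end SKAux
namespace SKAux

variable {σ : F →+* F} {π : F} {v : F → ℤ}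

theorem best2 (x y : F) :
    (∃ z : F, z ≠ 0 ∧ vge v (v z) x ∧ vge v (v z) y ∧ (z = x ∨ z = y)) ∨ (x = 0 ∧ y = 0) := by
  by_cases hx : x = 0
  · by_cases hy : y = 0
    · exact Or.inr ⟨hx, hy⟩
    · exact Or.inl ⟨y, hy, Or.inl hx, Or.inr le_rfl, Or.inr rfl⟩
  · by_cases hy : y = 0
    · exact Or.inl ⟨x, hx, Or.inr le_rfl, Or.inl hy, Or.inl rfl⟩
    · rcases le_total (v x) (v y) with h | h
      · exact Or.inl ⟨x, hx, Or.inr le_rfl, Or.inr h, Or.inl rfl⟩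
      · exact Or.inl ⟨y, hy, Or.inr h, Or.inr le_rfl, Or.inr rfl⟩

theorem smith_main (hP : Ax σ π v) {u0 w0 u1 w1 : F × F} {p q r s : F}
    (hd0 : dd u0 w0 ≠ 0) (hd1 : dd u1 w1 ≠ 0)
    (hu1 : u1 = p • u0 + r • w0) (hw1 : w1 = q • u0 + s • w0)
    (hp : p ≠ 0) (hq : vge v (v p) q) (hr : vge v (v p) r) (hs : vge v (v p) s) :
    ∃ u w : F × F, ∃ m n : ℤ, dd u w ≠ 0 ∧ spanL v u0 w0 = spanL v u w ∧
      spanL v u1 w1 = spanL v ((π ^ m) • u) ((π ^ n) • w) := by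
  have hdiv : ∀ c : F, vge v (v p) c → vge v 0 (c / p) := by
    intro c hc
    by_cases hc0 : c = 0
    · rw [hc0, zero_div]; exact vge_zero 0
    · refine Or.inr ?_
      rw [div_eq_mul_inv, hP.hvm c p⁻¹ hc0 (inv_ne_zero hp), v_inv hP hp]
      have := hc.resolve_left hc0; omega
  have hspan1 : spanL v u1 w1 = spanL v u1 (w1 + (-(q / p)) • u1) :=
    span_colop hP (vge_neg hP (hdiv q hq)) u1 w1
  have hw1' : w1 + (-(q / p)) • u1 = (s - q * r / p) • w0 := by
    rw [hu1, hw1]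
    apply Prod.ext_iff.mpr
    constructor
    · simp only [Prod.fst_add, Prod.snd_add, Prod.smul_fst, Prod.smul_snd, smul_eq_mul]
      field_simp; ring
    · simp only [Prod.fst_add, Prod.snd_add, Prod.smul_fst, Prod.smul_snd, smul_eq_mul]
      field_simp; ring
  have hδ : s - q * r / p ≠ 0 := by
    intro h0
    have hz : dd u1 (w1 + (-(q / p)) • u1) = 0 := by
      rw [hw1', h0, zero_smul]; simp [dd]
    rw [dd_colop] at hz
    exact hd1 hz
  have hspan0 : spanL v u0 w0 = spanL v (u0 + (r / p) • w0) w0 :=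
    span_rowop hP (hdiv r hr) u0 w0
  have hu1'' : u1 = p • (u0 + (r / p) • w0) := by
    have hpr : p * (r / p) = r := by field_simp
    rw [hu1, smul_add, smul_smul, hpr]
  have hd0' : dd (u0 + (r / p) • w0) w0 ≠ 0 := by rw [dd_rowop]; exact hd0
  have hεne : p * (π ^ (v p))⁻¹ ≠ 0 := mul_ne_zero hp (inv_ne_zero (zpow_ne hP _))
  have hεv : v (p * (π ^ (v p))⁻¹) = 0 := by
    rw [hP.hvm _ _ hp (inv_ne_zero (zpow_ne hP _)), v_inv hP (zpow_ne hP _), v_zpow hP]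
    omega
  have hε'ne : (s - q * r / p) * (π ^ (v (s - q * r / p)))⁻¹ ≠ 0 :=
    mul_ne_zero hδ (inv_ne_zero (zpow_ne hP _))
  have hε'v : v ((s - q * r / p) * (π ^ (v (s - q * r / p)))⁻¹) = 0 := by
    rw [hP.hvm _ _ hδ (inv_ne_zero (zpow_ne hP _)), v_inv hP (zpow_ne hP _), v_zpow hP]
    omega
  refine ⟨(p * (π ^ (v p))⁻¹) • (u0 + (r / p) • w0),
    ((s - q * r / p) * (π ^ (v (s - q * r / p)))⁻¹) • w0, v p, v (s - q * r / p), ?_, ?_, ?_⟩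
  · rw [dd_scale]
    exact mul_ne_zero (mul_ne_zero hεne hε'ne) hd0'
  · rw [hspan0]
    exact ((span_unitR hP hε'ne hε'v _ _).symm).trans (span_unitL hP hεne hεv _ _).symm
  · have e1 : (π ^ (v p)) • ((p * (π ^ (v p))⁻¹) • (u0 + (r / p) • w0)) = u1 := by
      rw [smul_smul, hu1'']
      congr 1
      rw [mul_comm p ((π ^ (v p))⁻¹), ← mul_assoc, mul_inv_cancel₀ (zpow_ne hP _), one_mul]
    have e2 : (π ^ (v (s - q * r / p))) •
        (((s - q * r / p) * (π ^ (v (s - q * r / p)))⁻¹) • w0) = w1 + (-(q / p)) • u1 := by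
      rw [smul_smul, hw1']
      congr 1
      rw [mul_comm (s - q * r / p) _, ← mul_assoc, mul_inv_cancel₀ (zpow_ne hP _), one_mul]
    rw [e1, e2]
    exact hspan1

theorem smith (hP : Ax σ π v) {u0 w0 u1 w1 : F × F}
    (hd0 : dd u0 w0 ≠ 0) (hd1 : dd u1 w1 ≠ 0) :
    ∃ u w : F × F, ∃ m n : ℤ, dd u w ≠ 0 ∧ spanL v u0 w0 = spanL v u w ∧
      spanL v u1 w1 = spanL v ((π ^ m) • u) ((π ^ n) • w) := by
  have hu1 : u1 = sC u0 w0 u1 • u0 + tC u0 w0 u1 • w0 := rep hd0 u1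
  have hw1 : w1 = sC u0 w0 w1 • u0 + tC u0 w0 w1 • w0 := rep hd0 w1
  set p := sC u0 w0 u1 with hpd
  set r := tC u0 w0 u1 with hrd
  set q := sC u0 w0 w1 with hqd
  set s := tC u0 w0 w1 with hsd
  rcases best2 (v := v) p r with ⟨z1, hz1ne, hz1p, hz1r, hz1eq⟩ | ⟨hp0, hr0⟩
  · rcases best2 (v := v) q s with ⟨z2, hz2ne, hz2q, hz2s, hz2eq⟩ | ⟨hq0, hs0⟩
    · rcases le_total (v z1) (v z2) with hcmp | hcmp
      · have hq' : vge v (v z1) q := vge_mono hcmp hz2q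
        have hs' : vge v (v z1) s := vge_mono hcmp hz2s
        rcases hz1eq with rfl | rfl
        · exact smith_main hP hd0 hd1 hu1 hw1 hz1ne hq' hz1r hs'
        · have hd0' : dd w0 u0 ≠ 0 := by rw [dd_comm]; exact neg_ne_zero.mpr hd0
          have hu1' : u1 = r • w0 + p • u0 := by rw [hu1, add_comm]
          have hw1' : w1 = s • w0 + q • u0 := by rw [hw1, add_comm]
          obtain ⟨u, w, m, n, h1, h2, h3⟩ :=
            smith_main hP hd0' hd1 hu1' hw1' hz1ne hs' hz1p hq'
          exact ⟨u, w, m, n, h1, (span_comm u0 w0).trans h2, h3⟩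
      · have hp' : vge v (v z2) p := vge_mono hcmp hz1p
        have hr' : vge v (v z2) r := vge_mono hcmp hz1r
        rcases hz2eq with rfl | rfl
        · have hd1' : dd w1 u1 ≠ 0 := by rw [dd_comm]; exact neg_ne_zero.mpr hd1
          obtain ⟨u, w, m, n, h1, h2, h3⟩ :=
            smith_main hP hd0 hd1' hw1 hu1 hz2ne hp' hz2s hr'
          exact ⟨u, w, m, n, h1, h2, (span_comm u1 w1).trans h3⟩
        · have hd0' : dd w0 u0 ≠ 0 := by rw [dd_comm]; exact neg_ne_zero.mpr hd0
          have hd1' : dd w1 u1 ≠ 0 := by rw [dd_comm]; exact neg_ne_zero.mpr hd1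
          have hu1' : u1 = r • w0 + p • u0 := by rw [hu1, add_comm]
          have hw1' : w1 = s • w0 + q • u0 := by rw [hw1, add_comm]
          obtain ⟨u, w, m, n, h1, h2, h3⟩ :=
            smith_main hP hd0' hd1' hw1' hu1' hz2ne hr' hz2q hp'
          exact ⟨u, w, m, n, h1, (span_comm u0 w0).trans h2, (span_comm u1 w1).trans h3⟩
    · exfalso
      apply hd1
      have hzero : w1 = 0 := by rw [hw1, hq0, hs0]; simp
      rw [hzero]; simp [dd]
  · exfalso
    apply hd1
    have hzero : u1 = 0 := by rw [hu1, hp0, hr0]; simp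
    rw [hzero]; simp [dd]

end SKAux
namespace SKAux

variable {σ : F →+* F} {π : F} {v : F → ℤ}

theorem keylemma (hP : Ax σ π v) {b : F × F} (hb : herm σ b b ≠ 0) {α : ℤ}
    (hα : v (herm σ b b) = 2 * α) {Λ₀ Λb : Set (F × F)}
    (hbin : (π ^ (-α)) • b ∈ Λb) (hbout : (π ^ (-α)) • b ∉ (fun x => π • x) '' Λb)
    {u w : F × F} (hd : dd u w ≠ 0) {r : ℤ} (hr : 1 ≤ r)
    (hΛ0 : Λ₀ = spanL v u w) (hΛb : Λb = spanL v ((π ^ (-r)) • u) ((π ^ r) • w))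
    (hA : vge v (2 * r) (herm σ u u)) (hB : vge v 0 (herm σ u w))
    (hΔ : vge v 0 (herm σ w w)) :
    ∀ s : ℤ, ((π ^ s) • ((π ^ (-α)) • b) ∈ Λ₀ ↔ r ≤ s) := by
  have hbin' : (π ^ (-α)) • b ∈ spanL v ((π ^ (-r)) • u) ((π ^ r) • w) := by
    rw [← hΛb]; exact hbin
  obtain ⟨hS, hT⟩ := (mem_span_scaled hP hd (-r) r _).mp hbin'
  have hq0 : herm σ ((π ^ (-α)) • b) ((π ^ (-α)) • b) ≠ 0 := by
    rw [herm_smul2]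
    exact mul_ne_zero (mul_ne_zero (zpow_ne hP _) (sigma_ne hP (zpow_ne hP _))) hb
  have hqv : v (herm σ ((π ^ (-α)) • b) ((π ^ (-α)) • b)) = 0 := by
    rw [herm_smul2, hP.hvm _ _ (mul_ne_zero (zpow_ne hP _) (sigma_ne hP (zpow_ne hP _))) hb,
      hP.hvm _ _ (zpow_ne hP _) (sigma_ne hP (zpow_ne hP _)), hP.hvs, v_zpow hP, hα]
    omega
  have himg : (fun x => π • x) '' Λb = spanL v ((π ^ (1 - r)) • u) ((π ^ (1 + r)) • w) := by
    rw [hΛb, image_pi_span]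
    have e1 : π • ((π ^ (-r)) • u) = (π ^ (1 - r)) • u := by
      rw [smul_smul, show (1 - r : ℤ) = 1 + (-r) by ring, zpow_add₀ hP.hpi, zpow_one]
    have e2 : π • ((π ^ r) • w) = (π ^ (1 + r)) • w := by
      rw [smul_smul, zpow_add₀ hP.hpi, zpow_one]
    rw [e1, e2]
  have hbout' : ¬ (vge v (1 - r) (sC u w ((π ^ (-α)) • b))
      ∧ vge v (1 + r) (tC u w ((π ^ (-α)) • b))) := by
    intro hcon
    exact hbout (by rw [himg]; exact (mem_span_scaled hP hd _ _ _).mpr hcon)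
  have hSv : sC u w ((π ^ (-α)) • b) ≠ 0 ∧ v (sC u w ((π ^ (-α)) • b)) = -r := by
    have hkey : ¬ vge v (1 - r) (sC u w ((π ^ (-α)) • b)) := by
      intro hvS
      have hT' : ¬ vge v (1 + r) (tC u w ((π ^ (-α)) • b)) := fun h => hbout' ⟨hvS, h⟩
      rw [not_vge] at hT'
      obtain ⟨hT0, hTlt⟩ := hT'
      have hTv : v (tC u w ((π ^ (-α)) • b)) = r := by
        have := hT.resolve_left hT0; omega
      have hexp : herm σ ((π ^ (-α)) • b) ((π ^ (-α)) • b)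
          = sC u w ((π ^ (-α)) • b) * σ (sC u w ((π ^ (-α)) • b)) * herm σ u u
            + sC u w ((π ^ (-α)) • b) * σ (tC u w ((π ^ (-α)) • b)) * herm σ u w
            + tC u w ((π ^ (-α)) • b) * σ (sC u w ((π ^ (-α)) • b)) * herm σ w u
            + tC u w ((π ^ (-α)) • b) * σ (tC u w ((π ^ (-α)) • b)) * herm σ w w := by
        rw [← herm_comb, ← rep hd]
      have e1 : vge v 1 (sC u w ((π ^ (-α)) • b) * σ (sC u w ((π ^ (-α)) • b)) * herm σ u u) := by
        by_cases hS0 : sC u w ((π ^ (-α)) • b) = 0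
        · exact Or.inl (by rw [hS0]; simp)
        by_cases hA0 : herm σ u u = 0
        · exact Or.inl (by rw [hA0, mul_zero])
        refine Or.inr ?_
        rw [hP.hvm _ _ (mul_ne_zero hS0 (sigma_ne hP hS0)) hA0,
          hP.hvm _ _ hS0 (sigma_ne hP hS0), hP.hvs]
        have h1 := hvS.resolve_left hS0
        have h2 := hA.resolve_left hA0
        omega
      have e2 : vge v 1 (sC u w ((π ^ (-α)) • b) * σ (tC u w ((π ^ (-α)) • b)) * herm σ u w) := by
        by_cases hS0 : sC u w ((π ^ (-α)) • b) = 0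
        · exact Or.inl (by rw [hS0]; simp)
        by_cases hB0 : herm σ u w = 0
        · exact Or.inl (by rw [hB0, mul_zero])
        refine Or.inr ?_
        rw [hP.hvm _ _ (mul_ne_zero hS0 (sigma_ne hP hT0)) hB0,
          hP.hvm _ _ hS0 (sigma_ne hP hT0), hP.hvs]
        have h1 := hvS.resolve_left hS0
        have h2 := hB.resolve_left hB0
        omega
      have e3 : vge v 1 (tC u w ((π ^ (-α)) • b) * σ (sC u w ((π ^ (-α)) • b)) * herm σ w u) := by
        by_cases hS0 : sC u w ((π ^ (-α)) • b) = 0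
        · exact Or.inl (by rw [hS0, map_zero, mul_zero, zero_mul])
        by_cases hB0 : herm σ u w = 0
        · exact Or.inl (by rw [herm_conj hP u w, hB0, map_zero, mul_zero])
        refine Or.inr ?_
        rw [herm_conj hP u w,
          hP.hvm _ _ (mul_ne_zero hT0 (sigma_ne hP hS0)) (sigma_ne hP hB0),
          hP.hvm _ _ hT0 (sigma_ne hP hS0), hP.hvs, hP.hvs]
        have h1 := hvS.resolve_left hS0
        have h2 := hB.resolve_left hB0
        omega
      have e4 : vge v 1 (tC u w ((π ^ (-α)) • b) * σ (tC u w ((π ^ (-α)) • b)) * herm σ w w) := by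
        by_cases hΔ0 : herm σ w w = 0
        · exact Or.inl (by rw [hΔ0, mul_zero])
        refine Or.inr ?_
        rw [hP.hvm _ _ (mul_ne_zero hT0 (sigma_ne hP hT0)) hΔ0,
          hP.hvm _ _ hT0 (sigma_ne hP hT0), hP.hvs]
        have h2 := hΔ.resolve_left hΔ0
        omega
      have hvsum : vge v 1 (herm σ ((π ^ (-α)) • b) ((π ^ (-α)) • b)) := by
        rw [hexp]
        exact vge_add hP (vge_add hP (vge_add hP e1 e2) e3) e4
      rcases hvsum with h0 | hle
      · exact hq0 h0
      · omega
    rw [not_vge] at hkey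
    obtain ⟨hS0, hSlt⟩ := hkey
    refine ⟨hS0, ?_⟩
    have := hS.resolve_left hS0; omega
  intro s
  rw [hΛ0, mem_span_iff hP hd, sC_smul, tC_smul]
  constructor
  · rintro ⟨h1, h2⟩
    rcases h1 with h0 | hle
    · exact absurd h0 (mul_ne_zero (zpow_ne hP s) hSv.1)
    · rw [hP.hvm _ _ (zpow_ne hP s) hSv.1, v_zpow hP, hSv.2] at hle; omega
  · intro hrs
    constructor
    · exact Or.inr (by rw [hP.hvm _ _ (zpow_ne hP s) hSv.1, v_zpow hP, hSv.2]; omega)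
    · by_cases hT0 : tC u w ((π ^ (-α)) • b) = 0
      · exact Or.inl (by rw [hT0, mul_zero])
      · refine Or.inr ?_
        rw [hP.hvm _ _ (zpow_ne hP s) hT0, v_zpow hP]
        have := hT.resolve_left hT0; omega

theorem walkex (hP : Ax σ π v) {Λ₀ Λb : Set (F × F)} {u w : F × F} (hd : dd u w ≠ 0)
    {r : ℤ} (hr : 1 ≤ r) (hΛ0 : Λ₀ = spanL v u w)
    (hΛb : Λb = spanL v ((π ^ (-r)) • u) ((π ^ r) • w))
    (hA : vge v (2 * r) (herm σ u u)) (hB : vge v 0 (herm σ u w))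
    (hΔ : vge v 0 (herm σ w w)) (hvdd : v (dd u w) = 0) :
    ∃ P Q : Set (F × F), IsVertex2 σ π v P ∧ Λ₀ ⊆ P ∧ IsVertex2 σ π v Q ∧ Λb ⊆ Q ∧
      WalkN σ π v (r - 1).toNat P Q := by
  set f : ℕ → Set (F × F) :=
    fun i => spanL v ((π ^ (-(i : ℤ) - 1)) • u) ((π ^ (i : ℤ)) • w) with hf
  have hV2 : ∀ i : ℕ, (i : ℤ) ≤ r - 1 → IsVertex2 σ π v (f i) := by
    intro i hi
    simp only [hf]
    exact vertex2_scaled hP hd hvdd hA hB hΔ (-(i : ℤ) - 1) (i : ℤ) (by omega) (by omega)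
      (by omega)
  have hadj : ∀ i : ℕ, i < (r - 1).toNat → AdjV σ π v (f i) (f (i + 1)) := by
    intro i hi
    have hi' : (i : ℤ) < r - 1 := by omega
    refine ⟨hV2 i (by omega), hV2 (i + 1) (by push_cast; omega), ?_, ?_⟩
    · intro heq
      have hmem : ((π ^ (-(i : ℤ) - 2)) • u + (0 : F) • w) ∈ f (i + 1) := by
        simp only [hf]
        rw [mem_span_scaled hP hd, sC_comb hd, tC_comb hd]
        exact ⟨Or.inr (by rw [v_zpow hP]; push_cast; omega), vge_zero _⟩
      rw [← heq] at hmem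
      simp only [hf] at hmem
      rw [mem_span_scaled hP hd, sC_comb hd, tC_comb hd] at hmem
      rcases hmem.1 with h0 | hle
      · exact zpow_ne hP _ h0
      · rw [v_zpow hP] at hle; omega
    · have hint : f i ∩ f (i + 1)
          = spanL v ((π ^ (-(i : ℤ) - 1)) • u) ((π ^ ((i : ℤ) + 1)) • w) := by
        simp only [hf]
        ext z
        rw [Set.mem_inter_iff, mem_span_scaled hP hd, mem_span_scaled hP hd,
          mem_span_scaled hP hd]
        constructor
        · rintro ⟨⟨h1, _⟩, _, h4⟩
          exact ⟨h1, vge_mono (by push_cast; omega) h4⟩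
        · rintro ⟨h1, h2⟩
          exact ⟨⟨h1, vge_mono (by omega) h2⟩, vge_mono (by push_cast; omega) h1,
            vge_mono (by push_cast; omega) h2⟩
      rw [hint]
      exact vertex0_scaled hP hd hvdd hA hB hΔ (-(i : ℤ) - 1) ((i : ℤ) + 1) (by omega)
        (by omega) (by omega)
  have hsub0 : Λ₀ ⊆ f 0 := by
    rw [hΛ0]; intro z hz
    simp only [hf]
    rw [mem_span_scaled hP hd]
    obtain ⟨h1, h2⟩ := (mem_span_iff hP hd z).mp hz
    exact ⟨vge_mono (by omega) h1, vge_mono (by omega) h2⟩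
  have hsubb : Λb ⊆ f ((r - 1).toNat) := by
    rw [hΛb]; intro z hz
    rw [mem_span_scaled hP hd] at hz
    simp only [hf]
    rw [mem_span_scaled hP hd]
    exact ⟨vge_mono (by omega) hz.1, vge_mono (by omega) hz.2⟩
  exact ⟨f 0, f ((r - 1).toNat), hV2 0 (by push_cast; omega), hsub0,
    hV2 ((r - 1).toNat) (by omega), hsubb, f, rfl, rfl, hadj⟩

theorem part2final (hP : Ax σ π v) {b : F × F} {α : ℤ} {Λ₀ Λb : Set (F × F)}
    (h0d : dualL σ v Λ₀ = Λ₀) (hbin : (π ^ (-α)) • b ∈ Λb) {r : ℤ} (hr : 1 ≤ r)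
    (key : ∀ s : ℤ, ((π ^ s) • ((π ^ (-α)) • b) ∈ Λ₀ ↔ r ≤ s))
    (wex : ∃ P Q : Set (F × F), IsVertex2 σ π v P ∧ Λ₀ ⊆ P ∧ IsVertex2 σ π v Q ∧ Λb ⊆ Q ∧
      WalkN σ π v (r - 1).toNat P Q)
    {e : ℕ}
    (hE : IsLeast {j : ℕ | ∃ P Q : Set (F × F), IsVertex2 σ π v P ∧ Λ₀ ⊆ P ∧
      IsVertex2 σ π v Q ∧ Λb ⊆ Q ∧ WalkN σ π v j P Q} e) :
    nIs π b Λ₀ (α - 1 - e) := by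
  have he1 : e ≤ (r - 1).toNat := hE.2 wex
  obtain ⟨P, Q, hP2, h0P, hQ2, hbQ, hwalk⟩ := hE.1
  have hchain := walk_chain hP e P Q hwalk _ (hbQ hbin)
  have hstep : (π ^ ((e : ℤ) + 1)) • ((π ^ (-α)) • b) ∈ Λ₀ := by
    have h1 : π • ((π ^ ((e : ℤ))) • ((π ^ (-α)) • b)) ∈ (fun x => π • x) '' P :=
      ⟨_, hchain, rfl⟩
    rw [← hP2.2] at h1
    have h2 : dualL σ v P ⊆ Λ₀ := by
      have h3 := dual_anti (σ := σ) (v := v) h0P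
      rw [h0d] at h3; exact h3
    have h4 := h2 h1
    rw [zpow_add₀ hP.hpi, zpow_one, mul_comm, mul_smul]
    exact h4
  have her : r ≤ (e : ℤ) + 1 := (key _).mp hstep
  constructor
  · show (π ^ (-(α - 1 - (e : ℤ)))) • b ∈ Λ₀
    have harith : (π : F) ^ (-(α - 1 - (e : ℤ))) = π ^ ((e : ℤ) + 1) * π ^ (-α) := by
      rw [← zpow_add₀ hP.hpi]; congr 1; ring
    rw [harith, mul_smul]
    exact (key _).mpr (by omega)
  · intro m hm
    have harith : (π : F) ^ (α - m) * π ^ (-α) = π ^ (-m) := by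
      rw [← zpow_add₀ hP.hpi]; congr 1; ring
    have hmem : (π ^ (α - m)) • ((π ^ (-α)) • b) ∈ Λ₀ := by
      rw [smul_smul, harith]; exact hm
    have := (key _).mp hmem
    omega

end SKAux
open SKAux in
theorem statement6
    (σ : F →+* F) (π : F) (v : F → ℤ)
    (hinv : ∀ x, σ (σ x) = x)
    (hσπ : σ π = -π)
    (hπ : π ≠ 0)
    (h2 : (2 : F) ≠ 0)
    (hvπ : v π = 1)
    (hv2 : v (2 : F) = 0)
    (hvσ : ∀ x, v (σ x) = v x)
    (hvmul : ∀ x y : F, x ≠ 0 → y ≠ 0 → v (x * y) = v x + v y)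
    (hvadd : ∀ x y : F, x ≠ 0 → y ≠ 0 → x + y ≠ 0 → min (v x) (v y) ≤ v (x + y))
    (heven : ∀ x : F, σ x = x → x ≠ 0 → Even (v x))
    (b : F × F) (hb : herm σ b b ≠ 0)
    (α : ℤ) (hα : v (herm σ b b) = 2 * α)
    (Λb : Set (F × F)) (hΛb : IsVertex0 σ v Λb)
    (hbin : (π ^ (-α)) • b ∈ Λb) (hbout : (π ^ (-α)) • b ∉ (fun x => π • x) '' Λb)
    (Λ₀ : Set (F × F)) (h0 : IsVertex0 σ v Λ₀) :
    (Λ₀ = Λb → nIs π b Λ₀ α) ∧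
    (Λ₀ ≠ Λb → ∀ e : ℕ,
      IsLeast {j : ℕ | ∃ P Q : Set (F × F), IsVertex2 σ π v P ∧ Λ₀ ⊆ P ∧
        IsVertex2 σ π v Q ∧ Λb ⊆ Q ∧ WalkN σ π v j P Q} e →
      nIs π b Λ₀ (α - 1 - e)) := by
  have hP : SKAux.Ax σ π v := ⟨hinv, hπ, hvπ, hvσ, hvmul, hvadd⟩
  constructor
  · -- Λ₀ = Λb
    intro h0eq
    subst h0eq
    constructor
    · exact hbin
    · intro m hm
      by_contra hlt
      push_neg at hlt
      obtain ⟨u1, w1, li1, heq1⟩ := hΛb.1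
      apply hbout
      refine ⟨(π ^ (m - α - 1)) • ((π ^ (-m)) • b), ?_, ?_⟩
      · rw [heq1]
        refine span_smul_mem hP (Or.inr ?_) ?_
        · rw [v_zpow hP]; omega
        · rw [← heq1]; exact hm
      · show π • ((π ^ (m - α - 1)) • ((π ^ (-m)) • b)) = (π ^ (-α)) • b
        rw [smul_smul, smul_smul]
        congr 1
        rw [mul_assoc, ← zpow_add₀ hπ, ← zpow_one_add₀ hπ]
        congr 1
        ring
  · -- Λ₀ ≠ Λb
    intro hne e hE
    obtain ⟨u0, w0, li0, h0eq⟩ := h0.1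
    obtain ⟨u1, w1, li1, h1eq⟩ := hΛb.1
    have hd0 := (linIndep_iff u0 w0).mp li0
    have hd1 := (linIndep_iff u1 w1).mp li1
    obtain ⟨u, w, m, n, hduw, hsp0, hsp1⟩ := smith hP hd0 hd1
    have hΛ0 : Λ₀ = spanL v u w := h0eq.trans hsp0
    have hΛb' : Λb = spanL v ((π ^ m) • u) ((π ^ n) • w) := h1eq.trans hsp1
    have hsd0 : dualL σ v (spanL v u w) = spanL v u w := by rw [← hΛ0]; exact h0.2
    obtain ⟨hA0, hB0, hΔ0, hvdd⟩ := selfdual_gram hP hduw hsd0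
    have hdsc : dd ((π ^ m) • u) ((π ^ n) • w) ≠ 0 := by
      rw [dd_scale]; exact mul_ne_zero (mul_ne_zero (zpow_ne hP m) (zpow_ne hP n)) hduw
    have hsdb : dualL σ v (spanL v ((π ^ m) • u) ((π ^ n) • w))
        = spanL v ((π ^ m) • u) ((π ^ n) • w) := by rw [← hΛb']; exact hΛb.2
    obtain ⟨hA1, hB1, hΔ1, hvdd1⟩ := selfdual_gram hP hdsc hsdb
    have hmn : m + n = 0 := by
      rw [dd_scale, hP.hvm _ _ (mul_ne_zero (zpow_ne hP m) (zpow_ne hP n)) hduw,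
        hP.hvm _ _ (zpow_ne hP m) (zpow_ne hP n), v_zpow hP, v_zpow hP, hvdd] at hvdd1
      omega
    rw [herm_smul2] at hA1
    rw [herm_smul2] at hΔ1
    have hcm : (π : F) ^ m * σ (π ^ m) ≠ 0 :=
      mul_ne_zero (zpow_ne hP m) (sigma_ne hP (zpow_ne hP m))
    have hvcm : v ((π : F) ^ m * σ (π ^ m)) = m + m := by
      rw [hP.hvm _ _ (zpow_ne hP m) (sigma_ne hP (zpow_ne hP m)), hP.hvs, v_zpow hP]
    have hcn : (π : F) ^ n * σ (π ^ n) ≠ 0 :=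
      mul_ne_zero (zpow_ne hP n) (sigma_ne hP (zpow_ne hP n))
    have hvcn : v ((π : F) ^ n * σ (π ^ n)) = n + n := by
      rw [hP.hvm _ _ (zpow_ne hP n) (sigma_ne hP (zpow_ne hP n)), hP.hvs, v_zpow hP]
    have hA1' : vge v 0 ((π : F) ^ m * σ (π ^ m) * herm σ u u) := hA1
    have hΔ1' : vge v 0 ((π : F) ^ n * σ (π ^ n) * herm σ w w) := hΔ1
    have hAm : vge v (0 - (m + m)) (herm σ u u) := by
      have := vge_mul_cancel hP hcm hA1'
      rwa [hvcm] at this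
    have hΔn : vge v (0 - (n + n)) (herm σ w w) := by
      have := vge_mul_cancel hP hcn hΔ1'
      rwa [hvcn] at this
    rcases lt_trichotomy n 0 with hn | hn | hn
    · -- n < 0 : swap the roles of u and w, r := m
      have hdwu : dd w u ≠ 0 := by rw [dd_comm]; exact neg_ne_zero.mpr hduw
      have hΛ0' : Λ₀ = spanL v w u := hΛ0.trans (span_comm u w)
      have hΛb'' : Λb = spanL v ((π ^ (-m)) • w) ((π ^ m) • u) := by
        rw [hΛb', span_comm, show n = -m by omega]
      have hr : 1 ≤ m := by omega
      have hA' : vge v (2 * m) (herm σ w w) := vge_mono (by omega) hΔn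
      have hB' : vge v 0 (herm σ w u) := by
        rw [herm_conj hP u w]; exact vge_sigma hP (hB0 : vge v 0 _)
      have hΔ' : vge v 0 (herm σ u u) := hA0
      have hvdd' : v (dd w u) = 0 := by
        rw [dd_comm w u, v_neg hP _ hduw]; exact hvdd
      have key := keylemma hP hb hα hbin hbout hdwu hr hΛ0' hΛb'' hA' hB' hΔ'
      have wex := walkex hP hdwu hr hΛ0' hΛb'' hA' hB' hΔ' hvdd'
      exact part2final hP h0.2 hbin hr key wex hE
    · -- n = 0 : then Λ₀ = Λb, contradiction
      exfalso
      apply hne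
      rw [hΛ0, hΛb', show m = 0 by omega, hn]
      simp [zpow_zero, one_smul]
    · -- 0 < n : r := n
      have hr : 1 ≤ n := hn
      have hΛb'' : Λb = spanL v ((π ^ (-n)) • u) ((π ^ n) • w) := by
        rw [hΛb', show m = -n by omega]
      have hA' : vge v (2 * n) (herm σ u u) := vge_mono (by omega) hAm
      have key := keylemma hP hb hα hbin hbout hduw hr hΛ0 hΛb'' hA' (hB0 : vge v 0 _)
        (hΔ0 : vge v 0 _)
      have wex := walkex hP hduw hr hΛ0 hΛb'' hA' (hB0 : vge v 0 _) (hΔ0 : vge v 0 _) hvdd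
      exact part2final hP h0.2 hbin hr key wex hE
end
end

section
/- Let b ∈ C with q(b) ≠ 0. If q(b) ∉ O_{F₀}, then no vertex lattice (of type 0 or 2) contains b. If q(b) ∈ O_{F₀} and α = ord_{π₀}(q(b)), then for every vertex lattice Λ one has b ∈ Λ if and only if D(Λ, Λ_b) ≤ α + 1/2; that is, the set of vertex lattices containing b is the closed ball of radius α + 1/2 centered at the midpoint Λ_b in the Bruhat–Tits tree. -/
noncomputable section

attribute [local instance] Classical.propDecidable
set_option linter.unusedSectionVars false
set_option maxHeartbeats 1000000

variable {F : Type} [Field F]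

namespace S7

/-- packaged hypotheses -/
structure GV (σ : F →+* F) (π : F) (v : F → ℤ) : Prop where
  hinv : ∀ x, σ (σ x) = x
  hπ : π ≠ 0
  hvπ : v π = 1
  hvσ : ∀ x, v (σ x) = v x
  hvmul : ∀ x y : F, x ≠ 0 → y ≠ 0 → v (x * y) = v x + v y
  hvadd : ∀ x y : F, x ≠ 0 → y ≠ 0 → x + y ≠ 0 → min (v x) (v y) ≤ v (x + y)
  heven : ∀ x : F, σ x = x → x ≠ 0 → Even (v x)

/-- `v x ≥ n`, counting `v 0 = ∞`. -/
def vge (v : F → ℤ) (x : F) (n : ℤ) : Prop := x = 0 ∨ n ≤ v x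

variable {σ : F →+* F} {π : F} {v : F → ℤ}

theorem inO_iff_vge {x : F} : inO v x ↔ vge v x 0 := Iff.rfl

namespace GV

variable (H : S7.GV σ π v)
include H

theorem v_one : v (1 : F) = 0 := by
  have := H.hvmul 1 1 one_ne_zero one_ne_zero
  simp at this; omega

theorem v_inv {x : F} (hx : x ≠ 0) : v x⁻¹ = - v x := by
  have := H.hvmul x x⁻¹ hx (inv_ne_zero hx)
  rw [mul_inv_cancel₀ hx, H.v_one] at this; omega

theorem v_neg (x : F) : v (-x) = v x := by
  rcases eq_or_ne x 0 with rfl | hx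
  · simp
  have hm : v ((-1 : F) * (-1)) = v (-1) + v (-1) := H.hvmul _ _ (by norm_num) (by norm_num)
  simp at hm
  rw [H.v_one] at hm
  have : v (-x) = v (-1) + v x := by
    have := H.hvmul (-1) x (by norm_num) hx
    simpa using this
  omega

theorem sig_ne {x : F} (hx : x ≠ 0) : σ x ≠ 0 := fun h => hx (by
  have := H.hinv x; rw [h, map_zero] at this; exact this.symm)

theorem sig_eq_zero {x : F} (h : σ x = 0) : x = 0 := by
  by_contra hx; exact H.sig_ne hx h

theorem vge_mono {x : F} {m n : ℤ} (h : m ≤ n) : vge v x n → vge v x m := by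
  rintro (rfl | hx); · exact Or.inl rfl
  · exact Or.inr (le_trans h hx)

theorem vge_add {x y : F} {n : ℤ} (hx : vge v x n) (hy : vge v y n) : vge v (x + y) n := by
  rcases hx with rfl | hx
  · rw [zero_add]; exact hy
  rcases hy with rfl | hy
  · rw [add_zero]; exact Or.inr hx
  rcases eq_or_ne x 0 with rfl | hx0
  · rw [zero_add]; exact Or.inr hy
  rcases eq_or_ne y 0 with rfl | hy0
  · rw [add_zero]; exact Or.inr hx
  rcases eq_or_ne (x + y) 0 with h | h
  · exact Or.inl h
  exact Or.inr (le_trans (le_min hx hy) (H.hvadd x y hx0 hy0 h))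

theorem vge_mul {x y : F} {m n : ℤ} (hx : vge v x m) (hy : vge v y n) :
    vge v (x * y) (m + n) := by
  rcases hx with rfl | hx; · exact Or.inl (by simp)
  rcases hy with rfl | hy; · exact Or.inl (by simp)
  rcases eq_or_ne x 0 with rfl | hx0; · exact Or.inl (by simp)
  rcases eq_or_ne y 0 with rfl | hy0; · exact Or.inl (by simp)
  right; rw [H.hvmul x y hx0 hy0]; omega

theorem vge_neg {x : F} {n : ℤ} (hx : vge v x n) : vge v (-x) n := by
  rcases hx with rfl | hx; · simp [vge]
  · right; rw [H.v_neg]; exact hx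

theorem vge_sub {x y : F} {n : ℤ} (hx : vge v x n) (hy : vge v y n) : vge v (x - y) n := by
  rw [sub_eq_add_neg]; exact H.vge_add hx (H.vge_neg hy)

theorem vge_sigma {x : F} {n : ℤ} (hx : vge v x n) : vge v (σ x) n := by
  rcases hx with rfl | hx; · simp [vge]
  · right; rw [H.hvσ]; exact hx

/-- dominance: adding something of strictly bigger valuation doesn't change v -/
theorem v_add_eq {x y : F} (hx : x ≠ 0) (hy : vge v y (v x + 1)) :
    x + y ≠ 0 ∧ v (x + y) = v x := by
  rcases hy with rfl | hy
  · exact ⟨by simpa using hx, by rw [add_zero]⟩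
  rcases eq_or_ne y 0 with rfl | hy0
  · exact ⟨by simpa using hx, by rw [add_zero]⟩
  have hne : x + y ≠ 0 := by
    intro h
    have hyx : y = -x := by linear_combination h
    rw [hyx, H.v_neg] at hy; omega
  refine ⟨hne, ?_⟩
  have h1 : min (v x) (v y) ≤ v (x + y) := H.hvadd x y hx hy0 hne
  have e : (x + y) + (-y) = x := by ring
  have h2 := H.hvadd (x + y) (-y) hne (neg_ne_zero.2 hy0) (by rw [e]; exact hx)
  rw [e, H.v_neg] at h2
  omega


theorem v_zpow_nat : ∀ n : ℕ, v (π ^ (n : ℤ)) = n := by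
  intro n
  induction n with
  | zero => simpa using H.v_one
  | succ n ih =>
    have h1 : π ^ ((n : ℤ) + 1) = π ^ (n : ℤ) * π := zpow_add_one₀ H.hπ _
    have h2 := H.hvmul (π ^ (n : ℤ)) π (zpow_ne_zero _ H.hπ) H.hπ
    push_cast
    rw [h1, h2, ih, H.hvπ]

theorem v_zpow (k : ℤ) : v (π ^ k) = k := by
  rcases le_or_gt 0 k with hk | hk
  · obtain ⟨n, rfl⟩ := Int.eq_ofNat_of_zero_le hk
    exact H.v_zpow_nat n
  · obtain ⟨n, rfl⟩ : ∃ n : ℕ, k = -(n : ℤ) := ⟨k.natAbs, by omega⟩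
    have h1 : π ^ (-(n : ℤ)) * π ^ (n : ℤ) = 1 := by
      rw [← zpow_add₀ H.hπ]; simp
    have h2 := H.hvmul (π ^ (-(n : ℤ))) (π ^ (n : ℤ)) (zpow_ne_zero _ H.hπ) (zpow_ne_zero _ H.hπ)
    rw [h1, H.v_one, H.v_zpow_nat n] at h2
    omega

theorem inO_zpow {k : ℤ} (hk : 0 ≤ k) : inO v (π ^ k) := Or.inr (by rw [H.v_zpow]; exact hk)

theorem inO_one : inO v (1 : F) := Or.inr (le_of_eq H.v_one.symm)

theorem inO_mul {x y : F} (hx : inO v x) (hy : inO v y) : inO v (x * y) := by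
  have := H.vge_mul (x := x) (y := y) (m := 0) (n := 0) hx hy
  exact (by simpa using this : vge v _ 0)

theorem inO_add {x y : F} (hx : inO v x) (hy : inO v y) : inO v (x + y) := H.vge_add hx hy

theorem inO_neg {x : F} (hx : inO v x) : inO v (-x) := H.vge_neg hx

theorem inO_sigma {x : F} (hx : inO v x) : inO v (σ x) := H.vge_sigma hx

/-- dividing by a unit preserves vge -/
theorem vge_div_unit {x d : F} {n : ℤ} (hd : d ≠ 0) (hvd : v d = 0) (hx : vge v x n) :
    vge v (x / d) n := by
  rcases hx with rfl | hx
  · exact Or.inl (by simp)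
  rcases eq_or_ne x 0 with rfl | hx0
  · exact Or.inl (by simp)
  right
  rw [div_eq_mul_inv, H.hvmul x d⁻¹ hx0 (inv_ne_zero hd), H.v_inv hd, hvd]
  omega

end GV

theorem inO_zero : inO v (0 : F) := Or.inl rfl

/-! ### herm lemmas -/

theorem herm_add_left (σ : F →+* F) (x y z : F × F) :
    herm σ (x + y) z = herm σ x z + herm σ y z := by
  simp [herm]; ring

theorem herm_smul_left (σ : F →+* F) (a : F) (x y : F × F) :
    herm σ (a • x) y = a * herm σ x y := by
  simp [herm, smul_eq_mul]; ring

theorem herm_smul_right (σ : F →+* F) (a : F) (x y : F × F) :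
    herm σ x (a • y) = σ a * herm σ x y := by
  simp [herm, smul_eq_mul, map_mul]; ring

theorem herm_expand (σ : F →+* F) (a b c d : F) (u w : F × F) :
    herm σ (a • u + b • w) (c • u + d • w) =
      a * σ c * herm σ u u + a * σ d * herm σ u w
      + b * σ c * herm σ w u + b * σ d * herm σ w w := by
  simp [herm, smul_eq_mul, map_add, map_mul]; ring

theorem herm_zero_right (σ : F →+* F) (x : F × F) : herm σ x 0 = 0 := by simp [herm]

theorem herm_zero_left (σ : F →+* F) (x : F × F) : herm σ 0 x = 0 := by simp [herm]

namespace GV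
variable (H : S7.GV σ π v)
include H

theorem herm_conj (x y : F × F) : herm σ y x = σ (herm σ x y) := by
  simp [herm, map_add, map_mul, H.hinv]; ring

theorem herm_self_fixed (x : F × F) : σ (herm σ x x) = herm σ x x :=
  (H.herm_conj x x).symm

omit H

theorem herm_nondeg {x : F × F} (h1 : herm σ x (0, 1) = 0) (h2 : herm σ x (1, 0) = 0) :
    x = 0 := by
  simp [herm] at h1 h2
  exact Prod.ext h1 h2

end GV

/-! ### pairs and coordinates -/

theorem coords_unique {u w : F × F} (h : LinearIndependent F ![u, w]) {a b c d : F}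
    (he : a • u + b • w = c • u + d • w) : a = c ∧ b = d := by
  have h2 := LinearIndependent.pair_iff.1 h (a - c) (b - d) (by
    rw [sub_smul, sub_smul]
    rw [show a • u - c • u + (b • w - d • w) = (a • u + b • w) - (c • u + d • w) by abel, he]
    simp)
  exact ⟨sub_eq_zero.1 h2.1, sub_eq_zero.1 h2.2⟩

theorem det_ne_of_indep {u w : F × F} (h : LinearIndependent F ![u, w]) :
    u.1 * w.2 - u.2 * w.1 ≠ 0 := by
  intro hD
  by_cases h1 : w.1 = 0 ∧ u.1 = 0
  · by_cases h2 : w.2 = 0 ∧ u.2 = 0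
    · have hu : u = 0 := Prod.ext h1.2 h2.2
      have := (LinearIndependent.pair_iff.1 h 1 0 (by simp [hu])).1
      exact one_ne_zero this
    · have := LinearIndependent.pair_iff.1 h w.2 (-u.2) (by
        refine Prod.ext ?_ ?_ <;> simp [h1.1, h1.2] <;> ring)
      rcases not_and_or.1 h2 with hc | hc <;> [exact hc this.1; exact hc (by simpa using this.2)]
  · have := LinearIndependent.pair_iff.1 h w.1 (-u.1) (by
      refine Prod.ext ?_ ?_ <;> simp <;> [ring; linear_combination -hD])
    rcases not_and_or.1 h1 with hc | hc <;> [exact hc this.1; exact hc (by simpa using this.2)]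

theorem exists_coords {u w : F × F} (h : LinearIndependent F ![u, w]) (y : F × F) :
    ∃ e f : F, y = e • u + f • w := by
  have hD := det_ne_of_indep h
  set D := u.1 * w.2 - u.2 * w.1 with hDdef
  refine ⟨(y.1 * w.2 - y.2 * w.1) / D, (u.1 * y.2 - u.2 * y.1) / D, ?_⟩
  refine Prod.ext ?_ ?_ <;> simp <;> field_simp <;> ring


theorem herm_add_right (σ : F →+* F) (x y z : F × F) :
    herm σ x (y + z) = herm σ x y + herm σ x z := by
  simp [herm, map_add]; ring

namespace GV
variable (H : S7.GV σ π v)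
include H

theorem comb_mem_spanL {u w x y : F × F} {a b : F} (hx : x ∈ spanL v u w)
    (hy : y ∈ spanL v u w) (ha : inO v a) (hb : inO v b) : a • x + b • y ∈ spanL v u w := by
  obtain ⟨a1, b1, ha1, hb1, rfl⟩ := hx
  obtain ⟨a2, b2, ha2, hb2, rfl⟩ := hy
  refine ⟨a * a1 + b * a2, a * b1 + b * b2, H.inO_add (H.inO_mul ha ha1) (H.inO_mul hb ha2),
    H.inO_add (H.inO_mul ha hb1) (H.inO_mul hb hb2), ?_⟩
  module

theorem smul_mem_spanL {u w x : F × F} {a : F} (hx : x ∈ spanL v u w) (ha : inO v a) :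
    a • x ∈ spanL v u w := by
  have := H.comb_mem_spanL hx hx ha inO_zero
  simpa using this

theorem left_mem_spanL (u w : F × F) : u ∈ spanL v u w :=
  ⟨1, 0, H.inO_one, inO_zero, by simp⟩

theorem right_mem_spanL (u w : F × F) : w ∈ spanL v u w :=
  ⟨0, 1, inO_zero, H.inO_one, by simp⟩

theorem spanL_subset {u w u' w' : F × F} (h1 : u' ∈ spanL v u w) (h2 : w' ∈ spanL v u w) :
    spanL v u' w' ⊆ spanL v u w := by
  rintro x ⟨a, b, ha, hb, rfl⟩
  exact H.comb_mem_spanL h1 h2 ha hb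

omit H

theorem pi_smul_comb (a b : F) (u w : F × F) :
    π • (a • u + b • w) = a • (π • u) + b • (π • w) := by
  rw [smul_add, smul_comm π a, smul_comm π b]

theorem image_pi_spanL (u w : F × F) :
    (fun x => π • x) '' spanL v u w = spanL v (π • u) (π • w) := by
  ext x
  constructor
  · rintro ⟨z, ⟨a, b, ha, hb, rfl⟩, rfl⟩
    exact ⟨a, b, ha, hb, pi_smul_comb a b u w⟩
  · rintro ⟨a, b, ha, hb, rfl⟩
    exact ⟨a • u + b • w, ⟨a, b, ha, hb, rfl⟩, pi_smul_comb a b u w⟩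

include H

theorem mem_dual_iff {u w x : F × F} :
    x ∈ dualL σ v (spanL v u w) ↔ inO v (herm σ x u) ∧ inO v (herm σ x w) := by
  constructor
  · intro hx
    exact ⟨hx u (H.left_mem_spanL u w), hx w (H.right_mem_spanL u w)⟩
  · rintro ⟨h1, h2⟩ y ⟨a, b, ha, hb, rfl⟩
    rw [herm_add_right, herm_smul_right, herm_smul_right]
    exact H.inO_add (H.inO_mul (H.inO_sigma ha) h1) (H.inO_mul (H.inO_sigma hb) h2)

omit H

theorem dualL_antitone {Λ Λ' : Set (F × F)} (h : Λ ⊆ Λ') : dualL σ v Λ' ⊆ dualL σ v Λ :=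
  fun _ hx y hy => hx y (h hy)

theorem gram0 {Λ : Set (F × F)} (h0 : dualL σ v Λ = Λ) {x y : F × F}
    (hx : x ∈ Λ) (hy : y ∈ Λ) : inO v (herm σ x y) := by
  rw [← h0] at hx; exact hx y hy

include H

theorem vge_of_mul_pi {z : F} (h : inO v (π * z)) : vge v z (-1) := by
  rcases eq_or_ne z 0 with rfl | hz
  · exact Or.inl rfl
  rcases h with h | h
  · exact absurd (by simpa [H.hπ] using h) hz
  · right
    rw [H.hvmul π z H.hπ hz, H.hvπ] at h
    omega

theorem gram2 {Λ : Set (F × F)} (h2 : dualL σ v Λ = (fun x => π • x) '' Λ) {x y : F × F}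
    (hx : x ∈ Λ) (hy : y ∈ Λ) : vge v (herm σ x y) (-1) := by
  have hmem : π • x ∈ dualL σ v Λ := by
    rw [h2]; exact ⟨x, hx, rfl⟩
  have := hmem y hy
  rw [herm_smul_left] at this
  exact H.vge_of_mul_pi this

omit H

theorem latt_smul_mem (H : S7.GV σ π v) {Λ : Set (F × F)} (hl : IsLattice v Λ) {x : F × F}
    (hx : x ∈ Λ) {c : F} (hc : inO v c) : c • x ∈ Λ := by
  obtain ⟨u, w, hi, rfl⟩ := hl
  exact H.smul_mem_spanL hx hc

end GV

/-! ### Gram determinant -/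

def detG (σ : F →+* F) (u w : F × F) : F :=
  herm σ u u * herm σ w w - herm σ u w * herm σ w u

namespace GV
variable (H : S7.GV σ π v)
include H

theorem vge_div {x d : F} {n : ℤ} (hd : d ≠ 0) (hx : vge v x n) :
    vge v (x / d) (n - v d) := by
  rcases hx with rfl | hx
  · exact Or.inl (by simp)
  rcases eq_or_ne x 0 with rfl | hx0
  · exact Or.inl (by simp)
  right
  rw [div_eq_mul_inv, H.hvmul x d⁻¹ hx0 (inv_ne_zero hd), H.v_inv hd]
  omega

theorem detG_ne_zero {u w : F × F} (h : LinearIndependent F ![u, w]) :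
    detG σ u w ≠ 0 := by
  intro hD
  set a := herm σ u u with ha
  set bb := herm σ u w with hbb
  set hwu := herm σ w u with hhwu
  set c := herm σ w w with hc
  have key : ∃ s t : F, ¬(s = 0 ∧ t = 0) ∧ s * a + t * hwu = 0 ∧ s * bb + t * c = 0 := by
    rcases eq_or_ne a 0 with haz | haz
    · have hb0 : bb * hwu = 0 := by
        have : a * c - bb * hwu = 0 := hD
        rw [haz] at this; linear_combination -this
      have hbz : bb = 0 ∧ hwu = 0 := by
        rcases mul_eq_zero.1 hb0 with h1 | h1
        · refine ⟨h1, ?_⟩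
          rw [hhwu, H.herm_conj, ← hbb, h1, map_zero]
        · refine ⟨?_, h1⟩
          have := congrArg σ h1
          rw [hhwu, H.herm_conj, H.hinv, map_zero] at this
          exact this
      exact ⟨1, 0, by simp, by rw [haz]; ring, by rw [hbz.1]; ring⟩
    · refine ⟨hwu, -a, fun h' => haz (neg_eq_zero.1 h'.2), by ring, ?_⟩
      have : a * c - bb * hwu = 0 := hD
      linear_combination -this
  obtain ⟨s, t, hst, h1, h2⟩ := key
  have hx0 : s • u + t • w ≠ 0 := by
    intro hzero
    exact hst (LinearIndependent.pair_iff.1 h s t hzero)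
  apply hx0
  have hxu : herm σ (s • u + t • w) u = 0 := by
    rw [herm_add_left, herm_smul_left, herm_smul_left, ← ha, ← hhwu]; exact h1
  have hxw : herm σ (s • u + t • w) w = 0 := by
    rw [herm_add_left, herm_smul_left, herm_smul_left, ← hbb, ← hc]; exact h2
  have hall : ∀ y : F × F, herm σ (s • u + t • w) y = 0 := by
    intro y
    obtain ⟨e, f, rfl⟩ := exists_coords h y
    rw [herm_add_right, herm_smul_right, herm_smul_right, hxu, hxw]; ring
  exact herm_nondeg (hall (0, 1)) (hall (1, 0))

theorem solve_coords {u w : F × F} (h : LinearIndependent F ![u, w]) (p q : F) :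
    p = (herm σ (p • u + q • w) u * herm σ w w - herm σ (p • u + q • w) w * herm σ w u)
        / detG σ u w ∧
    q = (herm σ (p • u + q • w) w * herm σ u u - herm σ (p • u + q • w) u * herm σ u w)
        / detG σ u w := by
  have hD := H.detG_ne_zero h
  have hα : herm σ (p • u + q • w) u = p * herm σ u u + q * herm σ w u := by
    rw [herm_add_left, herm_smul_left, herm_smul_left]
  have hβ : herm σ (p • u + q • w) w = p * herm σ u w + q * herm σ w w := by
    rw [herm_add_left, herm_smul_left, herm_smul_left]
  constructor
  · rw [hα, hβ, eq_div_iff hD, detG]; ring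
  · rw [hα, hβ, eq_div_iff hD, detG]; ring

end GV

namespace GV
variable (H : S7.GV σ π v)
include H

theorem inO_sub {x y : F} (hx : inO v x) (hy : inO v y) : inO v (x - y) :=
  H.vge_sub hx hy

theorem ustar_eqs {u w : F × F} (h : LinearIndependent F ![u, w]) :
    herm σ ((herm σ w w / detG σ u w) • u + (-(herm σ u w) / detG σ u w) • w) u = 1 ∧
    herm σ ((herm σ w w / detG σ u w) • u + (-(herm σ u w) / detG σ u w) • w) w = 0 ∧
    herm σ ((-(herm σ w u) / detG σ u w) • u + (herm σ u u / detG σ u w) • w) u = 0 ∧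
    herm σ ((-(herm σ w u) / detG σ u w) • u + (herm σ u u / detG σ u w) • w) w = 1 := by
  have hδ := H.detG_ne_zero h
  refine ⟨?_, ?_, ?_, ?_⟩ <;> rw [herm_add_left, herm_smul_left, herm_smul_left,
    div_mul_eq_mul_div, div_mul_eq_mul_div, ← add_div]
  · rw [div_eq_iff hδ, detG]; ring
  · rw [div_eq_zero_iff]; exact Or.inl (by ring)
  · rw [div_eq_zero_iff]; exact Or.inl (by ring)
  · rw [div_eq_iff hδ, detG]; ring

theorem detInv0 {u w : F × F} (h : LinearIndependent F ![u, w])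
    (hd : dualL σ v (spanL v u w) = spanL v u w) : v (detG σ u w) = 0 := by
  have hδ := H.detG_ne_zero h
  obtain ⟨e1, e2, e3, e4⟩ := H.ustar_eqs h
  have ha : inO v (herm σ u u) := gram0 hd (H.left_mem_spanL u w) (H.left_mem_spanL u w)
  have hb : inO v (herm σ u w) := gram0 hd (H.left_mem_spanL u w) (H.right_mem_spanL u w)
  have hwu : inO v (herm σ w u) := gram0 hd (H.right_mem_spanL u w) (H.left_mem_spanL u w)
  have hc : inO v (herm σ w w) := gram0 hd (H.right_mem_spanL u w) (H.right_mem_spanL u w)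
  have hu : ((herm σ w w / detG σ u w) • u + (-(herm σ u w) / detG σ u w) • w) ∈ spanL v u w := by
    rw [← hd, H.mem_dual_iff]
    rw [e1, e2]
    exact ⟨H.inO_one, inO_zero⟩
  have hw : ((-(herm σ w u) / detG σ u w) • u + (herm σ u u / detG σ u w) • w) ∈ spanL v u w := by
    rw [← hd, H.mem_dual_iff]
    rw [e3, e4]
    exact ⟨inO_zero, H.inO_one⟩
  obtain ⟨s, t, hs, ht, heq⟩ := hu
  obtain ⟨hs1, ht1⟩ := coords_unique h heq
  obtain ⟨s', t', hs', ht', heq'⟩ := hw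
  obtain ⟨hs2, ht2⟩ := coords_unique h heq'
  rw [← hs1] at hs; rw [← ht1] at ht; rw [← hs2] at hs'; rw [← ht2] at ht'
  have hinv : (detG σ u w)⁻¹ =
      (herm σ u u / detG σ u w) * (herm σ w w / detG σ u w)
      - (herm σ u w / detG σ u w) * (herm σ w u / detG σ u w) := by
    rw [div_mul_div_comm, div_mul_div_comm, div_sub_div_same, ← detG,
      eq_div_iff (mul_ne_zero hδ hδ), inv_mul_cancel_left₀ hδ]
  have h5 : inO v (herm σ u w / detG σ u w) := by
    have := H.inO_neg ht
    simpa [neg_div] using this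
  have h6 : inO v (herm σ w u / detG σ u w) := by
    have := H.inO_neg hs'
    simpa [neg_div] using this
  have hO : inO v (detG σ u w)⁻¹ := by
    rw [hinv]
    exact H.inO_sub (H.inO_mul ht' hs) (H.inO_mul h5 h6)
  have hOδ : inO v (detG σ u w) := by
    rw [detG]
    exact H.inO_sub (H.inO_mul ha hc) (H.inO_mul hb hwu)
  rcases hO with h0 | h0
  · exact absurd h0 (inv_ne_zero hδ)
  rcases hOδ with h1 | h1
  · exact absurd h1 hδ
  rw [H.v_inv hδ] at h0
  omega

theorem vge_pi : vge v π 1 := Or.inr (le_of_eq H.hvπ.symm)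

theorem detInv2 {u w : F × F} (h : LinearIndependent F ![u, w])
    (hd : dualL σ v (spanL v u w) = (fun x => π • x) '' (spanL v u w)) :
    v (detG σ u w) = -2 := by
  have hδ := H.detG_ne_zero h
  obtain ⟨e1, e2, e3, e4⟩ := H.ustar_eqs h
  have hg : ∀ x ∈ spanL v u w, ∀ y ∈ spanL v u w, vge v (herm σ x y) (-1) :=
    fun x hx y hy => H.gram2 hd hx hy
  have ha := hg u (H.left_mem_spanL u w) u (H.left_mem_spanL u w)
  have hb := hg u (H.left_mem_spanL u w) w (H.right_mem_spanL u w)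
  have hwu := hg w (H.right_mem_spanL u w) u (H.left_mem_spanL u w)
  have hc := hg w (H.right_mem_spanL u w) w (H.right_mem_spanL u w)
  have hu : ((herm σ w w / detG σ u w) • u + (-(herm σ u w) / detG σ u w) • w)
      ∈ spanL v (π • u) (π • w) := by
    rw [← image_pi_spanL, ← hd, H.mem_dual_iff, e1, e2]
    exact ⟨H.inO_one, inO_zero⟩
  have hw : ((-(herm σ w u) / detG σ u w) • u + (herm σ u u / detG σ u w) • w)
      ∈ spanL v (π • u) (π • w) := by
    rw [← image_pi_spanL, ← hd, H.mem_dual_iff, e3, e4]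
    exact ⟨inO_zero, H.inO_one⟩
  obtain ⟨s, t, hs, ht, heq⟩ := hu
  rw [smul_smul, smul_smul] at heq
  obtain ⟨hs1, ht1⟩ := coords_unique h heq
  obtain ⟨s', t', hs', ht', heq'⟩ := hw
  rw [smul_smul, smul_smul] at heq'
  obtain ⟨hs2, ht2⟩ := coords_unique h heq'
  have v1 : vge v (herm σ w w / detG σ u w) 1 := by
    rw [hs1]; exact H.vge_mul hs H.vge_pi
  have v2 : vge v (herm σ u w / detG σ u w) 1 := by
    have : vge v (-(herm σ u w) / detG σ u w) 1 := by rw [ht1]; exact H.vge_mul ht H.vge_pi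
    have := H.vge_neg this
    simpa [neg_div] using this
  have v3 : vge v (herm σ w u / detG σ u w) 1 := by
    have : vge v (-(herm σ w u) / detG σ u w) 1 := by rw [hs2]; exact H.vge_mul hs' H.vge_pi
    have := H.vge_neg this
    simpa [neg_div] using this
  have v4 : vge v (herm σ u u / detG σ u w) 1 := by
    rw [ht2]; exact H.vge_mul ht' H.vge_pi
  have hinv : (detG σ u w)⁻¹ =
      (herm σ u u / detG σ u w) * (herm σ w w / detG σ u w)
      - (herm σ u w / detG σ u w) * (herm σ w u / detG σ u w) := by
    rw [div_mul_div_comm, div_mul_div_comm, div_sub_div_same, ← detG,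
      eq_div_iff (mul_ne_zero hδ hδ), inv_mul_cancel_left₀ hδ]
  have hO : vge v (detG σ u w)⁻¹ 2 := by
    rw [hinv]
    exact H.vge_sub (H.vge_mul v4 v1) (H.vge_mul v2 v3)
  have hOδ : vge v (detG σ u w) (-2) := by
    rw [detG]
    exact H.vge_sub (H.vge_mul ha hc) (H.vge_mul hb hwu)
  rcases hO with h0 | h0
  · exact absurd h0 (inv_ne_zero hδ)
  rcases hOδ with h1 | h1
  · exact absurd h1 hδ
  rw [H.v_inv hδ] at h0
  omega

theorem crit0 {u w : F × F} (h : LinearIndependent F ![u, w])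
    (ha : inO v (herm σ u u)) (hb : inO v (herm σ u w))
    (hwu : inO v (herm σ w u)) (hc : inO v (herm σ w w))
    (hdet : v (detG σ u w) = 0) : dualL σ v (spanL v u w) = spanL v u w := by
  have hδ := H.detG_ne_zero h
  ext x
  rw [H.mem_dual_iff]
  constructor
  · rintro ⟨h1, h2⟩
    obtain ⟨p, q, rfl⟩ := exists_coords h x
    obtain ⟨hp, hq⟩ := H.solve_coords h p q
    refine ⟨p, q, ?_, ?_, rfl⟩
    · rw [hp]
      have : inO v (herm σ (p • u + q • w) u * herm σ w w
          - herm σ (p • u + q • w) w * herm σ w u) :=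
        H.inO_sub (H.inO_mul h1 hc) (H.inO_mul h2 hwu)
      have := H.vge_div_unit hδ hdet this
      exact this
    · rw [hq]
      have : inO v (herm σ (p • u + q • w) w * herm σ u u
          - herm σ (p • u + q • w) u * herm σ u w) :=
        H.inO_sub (H.inO_mul h2 ha) (H.inO_mul h1 hb)
      exact H.vge_div_unit hδ hdet this
  · rintro ⟨e, f, he, hf, rfl⟩
    constructor
    · rw [herm_add_left, herm_smul_left, herm_smul_left]
      exact H.inO_add (H.inO_mul he ha) (H.inO_mul hf hwu)
    · rw [herm_add_left, herm_smul_left, herm_smul_left]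
      exact H.inO_add (H.inO_mul he hb) (H.inO_mul hf hc)

theorem crit2 {u w : F × F} (h : LinearIndependent F ![u, w])
    (ha : vge v (herm σ u u) (-1)) (hb : vge v (herm σ u w) (-1))
    (hwu : vge v (herm σ w u) (-1)) (hc : vge v (herm σ w w) (-1))
    (hdet : v (detG σ u w) = -2) :
    dualL σ v (spanL v u w) = (fun x => π • x) '' (spanL v u w) := by
  have hδ := H.detG_ne_zero h
  rw [image_pi_spanL]
  ext x
  rw [H.mem_dual_iff]
  constructor
  · rintro ⟨h1, h2⟩
    obtain ⟨p, q, rfl⟩ := exists_coords h x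
    obtain ⟨hp, hq⟩ := H.solve_coords h p q
    have hp1 : vge v p 1 := by
      rw [hp]
      have hnum : vge v (herm σ (p • u + q • w) u * herm σ w w
          - herm σ (p • u + q • w) w * herm σ w u) (-1) := by
        have := H.vge_sub (H.vge_mul (n := -1) h1 hc) (H.vge_mul (n := -1) h2 hwu)
        simpa using this
      have := H.vge_div hδ hnum
      rw [hdet] at this
      simpa using this
    have hq1 : vge v q 1 := by
      rw [hq]
      have hnum : vge v (herm σ (p • u + q • w) w * herm σ u u
          - herm σ (p • u + q • w) u * herm σ u w) (-1) := by
        have := H.vge_sub (H.vge_mul (n := -1) h2 ha) (H.vge_mul (n := -1) h1 hb)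
        simpa using this
      have := H.vge_div hδ hnum
      rw [hdet] at this
      simpa using this
    refine ⟨p / π, q / π, ?_, ?_, ?_⟩
    · have := H.vge_div H.hπ hp1
      rw [H.hvπ] at this
      exact (by simpa using this : vge v _ 0)
    · have := H.vge_div H.hπ hq1
      rw [H.hvπ] at this
      exact (by simpa using this : vge v _ 0)
    · rw [smul_smul, smul_smul, div_mul_cancel₀ _ H.hπ, div_mul_cancel₀ _ H.hπ]
  · rintro ⟨e, f, he, hf, rfl⟩
    rw [smul_smul, smul_smul]
    have hepi : vge v (e * π) 1 := by simpa using H.vge_mul he H.vge_pi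
    have hfpi : vge v (f * π) 1 := by simpa using H.vge_mul hf H.vge_pi
    constructor
    · rw [herm_add_left, herm_smul_left, herm_smul_left]
      have := H.vge_add (H.vge_mul hepi ha) (H.vge_mul hfpi hwu)
      exact (by simpa using this : vge v _ 0)
    · rw [herm_add_left, herm_smul_left, herm_smul_left]
      have := H.vge_add (H.vge_mul hepi hb) (H.vge_mul hfpi hc)
      exact (by simpa using this : vge v _ 0)

end GV

namespace GV
variable (H : S7.GV σ π v)
include H

theorem notBoth {Λ : Set (F × F)} (h0 : IsVertex0 σ v Λ) (h2 : IsVertex2 σ π v Λ) : False := by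
  obtain ⟨⟨u, w, hi, rfl⟩, hd0⟩ := h0
  have e0 := H.detInv0 hi hd0
  have e2 := H.detInv2 hi h2.2
  omega

theorem inO_of_fixed {x : F} (hfix : σ x = x) (hx : vge v x (-1)) : inO v x := by
  rcases hx with rfl | hx
  · exact inO_zero
  rcases eq_or_ne x 0 with rfl | hx0
  · exact inO_zero
  right
  obtain ⟨k, hk⟩ := H.heven x hfix hx0
  omega

omit H

theorem orth_indep {σ : F →+* F} {b' c : F × F} (hq' : herm σ b' b' ≠ 0) (hc : c ≠ 0)
    (hor : herm σ c b' = 0) : LinearIndependent F ![b', c] := by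
  rw [LinearIndependent.pair_iff]
  intro s t hst
  have h1 : herm σ (s • b' + t • c) b' = 0 := by rw [hst]; exact herm_zero_left σ b'
  rw [herm_add_left, herm_smul_left, herm_smul_left, hor, mul_zero, add_zero] at h1
  have hs : s = 0 := by
    rcases mul_eq_zero.1 h1 with h | h
    · exact h
    · exact absurd h hq'
  subst hs
  rw [zero_smul, zero_add] at hst
  rcases smul_eq_zero.1 hst with h | h
  · exact ⟨rfl, h⟩
  · exact absurd h hc

include H

theorem extendPrim {u w x : F × F} (hi : LinearIndependent F ![u, w]) (hx : x ∈ spanL v u w)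
    (hprim : ¬∃ z ∈ spanL v u w, x = π • z) :
    ∃ y, LinearIndependent F ![x, y] ∧ spanL v u w = spanL v x y := by
  obtain ⟨a, b, ha, hb, rfl⟩ := hx
  have hcase : ¬(vge v a 1 ∧ vge v b 1) := by
    rintro ⟨ha1, hb1⟩
    apply hprim
    refine ⟨(a / π) • u + (b / π) • w, ⟨a / π, b / π, ?_, ?_, rfl⟩, ?_⟩
    · have := H.vge_div H.hπ ha1; rw [H.hvπ] at this; exact (by simpa using this : vge v _ 0)
    · have := H.vge_div H.hπ hb1; rw [H.hvπ] at this; exact (by simpa using this : vge v _ 0)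
    · rw [smul_add, smul_smul, smul_smul, mul_div_cancel₀ _ H.hπ, mul_div_cancel₀ _ H.hπ]
  rcases not_and_or.1 hcase with hA | hA
  · -- v a = 0
    have ha0 : a ≠ 0 ∧ v a = 0 := by
      rcases ha with rfl | ha
      · exact absurd (Or.inl rfl) hA
      constructor
      · rintro rfl; exact hA (Or.inl rfl)
      · by_contra hne
        exact hA (Or.inr (by omega))
    refine ⟨w, ?_, ?_⟩
    · rw [LinearIndependent.pair_iff]
      intro s t hst
      have : (s * a) • u + (s * b + t) • w = 0 := by
        rw [← hst]; match_scalars <;> ring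
      obtain ⟨h1, h2⟩ := LinearIndependent.pair_iff.1 hi _ _ this
      have hs : s = 0 := by
        rcases mul_eq_zero.1 h1 with h | h
        · exact h
        · exact absurd h ha0.1
      exact ⟨hs, by rw [hs] at h2; simpa using h2⟩
    · apply Set.Subset.antisymm
      · apply H.spanL_subset
        · refine ⟨a⁻¹, -(b / a), ?_, ?_, ?_⟩
          · exact Or.inr (by rw [H.v_inv ha0.1, ha0.2]; norm_num)
          · exact H.inO_neg (H.vge_div_unit ha0.1 ha0.2 hb)
          · exact (by match_scalars <;> field_simp [ha0.1] <;> ring : u = a⁻¹ • (a • u + b • w) + (-(b/a)) • w)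
        · exact H.right_mem_spanL (a • u + b • w) w
      · apply H.spanL_subset
        · exact ⟨a, b, ha, hb, rfl⟩
        · exact H.right_mem_spanL u w
  · -- v b = 0
    have hb0 : b ≠ 0 ∧ v b = 0 := by
      rcases hb with rfl | hbv
      · exact absurd (Or.inl rfl) hA
      constructor
      · rintro rfl; exact hA (Or.inl rfl)
      · by_contra hne
        exact hA (Or.inr (by omega))
    refine ⟨u, ?_, ?_⟩
    · rw [LinearIndependent.pair_iff]
      intro s t hst
      have : (s * a + t) • u + (s * b) • w = 0 := by
        rw [← hst]; match_scalars <;> ring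
      obtain ⟨h1, h2⟩ := LinearIndependent.pair_iff.1 hi _ _ this
      have hs : s = 0 := by
        rcases mul_eq_zero.1 h2 with h | h
        · exact h
        · exact absurd h hb0.1
      exact ⟨hs, by rw [hs] at h1; simpa using h1⟩
    · apply Set.Subset.antisymm
      · apply H.spanL_subset
        · exact H.right_mem_spanL (a • u + b • w) u
        · refine ⟨b⁻¹, -(a / b), ?_, ?_, ?_⟩
          · exact Or.inr (by rw [H.v_inv hb0.1, hb0.2]; norm_num)
          · exact H.inO_neg (H.vge_div_unit hb0.1 hb0.2 ha)
          · exact (by match_scalars <;> field_simp [hb0.1] <;> ring : w = b⁻¹ • (a • u + b • w) + (-(a/b)) • u)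
      · apply H.spanL_subset
        · exact ⟨a, b, ha, hb, rfl⟩
        · exact H.left_mem_spanL u w

end GV

theorem herm_sub_left (σ : F →+* F) (x y z : F × F) :
    herm σ (x - y) z = herm σ x z - herm σ y z := by
  simp [herm]; ring

namespace GV
variable (H : S7.GV σ π v)
include H

theorem decomp {u w b' : F × F} (hi : LinearIndependent F ![u, w])
    (hd : dualL σ v (spanL v u w) = spanL v u w)
    (hb' : b' ∈ spanL v u w) (hq' : herm σ b' b' ≠ 0) (hq : v (herm σ b' b') = 0) :
    ∃ c, LinearIndependent F ![b', c] ∧ spanL v u w = spanL v b' c ∧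
      herm σ c b' = 0 ∧ herm σ c c ≠ 0 ∧ v (herm σ c c) = 0 := by
  have hβ₁O : inO v (herm σ u b' / herm σ b' b') :=
    H.vge_div_unit hq' hq (gram0 hd (H.left_mem_spanL u w) hb')
  have hβ₂O : inO v (herm σ w b' / herm σ b' b') :=
    H.vge_div_unit hq' hq (gram0 hd (H.right_mem_spanL u w) hb')
  set β₁ := herm σ u b' / herm σ b' b' with hβ₁
  set β₂ := herm σ w b' / herm σ b' b' with hβ₂
  have hpu_mem : u - β₁ • b' ∈ spanL v u w := by
    have := H.comb_mem_spanL (H.left_mem_spanL u w) hb' H.inO_one (H.inO_neg hβ₁O)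
    simpa [sub_eq_add_neg] using this
  have hpw_mem : w - β₂ • b' ∈ spanL v u w := by
    have := H.comb_mem_spanL (H.right_mem_spanL u w) hb' H.inO_one (H.inO_neg hβ₂O)
    simpa [sub_eq_add_neg] using this
  have hpu_orth : herm σ (u - β₁ • b') b' = 0 := by
    rw [herm_sub_left, herm_smul_left, hβ₁]
    field_simp; ring
  have hpw_orth : herm σ (w - β₂ • b') b' = 0 := by
    rw [herm_sub_left, herm_smul_left, hβ₂]
    field_simp; ring
  have main : ∃ c, c ≠ 0 ∧ herm σ c b' = 0 ∧ spanL v u w = spanL v b' c := by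
    by_cases hpu0 : u - β₁ • b' = 0
    · have hu_eq : u = β₁ • b' := by rwa [sub_eq_zero] at hpu0
      by_cases hpw0 : w - β₂ • b' = 0
      · exfalso
        have hw_eq : w = β₂ • b' := by rwa [sub_eq_zero] at hpw0
        have hrel : β₂ • u + (-β₁) • w = 0 := by
          rw [hu_eq, hw_eq]; match_scalars <;> ring
        obtain ⟨h1, h2⟩ := LinearIndependent.pair_iff.1 hi _ _ hrel
        have hβ₁0 : β₁ = 0 := by simpa using h2
        have hu0 : u = 0 := by rw [hu_eq, hβ₁0, zero_smul]
        have := (LinearIndependent.pair_iff.1 hi 1 0 (by rw [hu0]; simp)).1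
        exact one_ne_zero this
      · refine ⟨w - β₂ • b', hpw0, hpw_orth, ?_⟩
        apply Set.Subset.antisymm
        · apply H.spanL_subset
          · exact ⟨β₁, 0, hβ₁O, inO_zero, by rw [hu_eq]; module⟩
          · exact ⟨β₂, 1, hβ₂O, H.inO_one, by module⟩
        · exact H.spanL_subset hb' hpw_mem
    · have hindp : LinearIndependent F ![b', u - β₁ • b'] := orth_indep hq' hpu0 hpu_orth
      obtain ⟨γ, lam, hco⟩ := exists_coords hindp (w - β₂ • b')
      have hγ : γ = 0 := by
        have h1 : herm σ (w - β₂ • b') b' = γ * herm σ b' b' + lam * herm σ (u - β₁ • b') b' := by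
          rw [hco, herm_add_left, herm_smul_left, herm_smul_left]
        rw [hpw_orth, hpu_orth, mul_zero, add_zero] at h1
        rcases mul_eq_zero.1 h1.symm with h | h
        · exact h
        · exact absurd h hq'
      have hlam_eq : w - β₂ • b' = lam • (u - β₁ • b') := by
        rw [hco, hγ, zero_smul, zero_add]
      by_cases hlam : inO v lam
      · refine ⟨u - β₁ • b', hpu0, hpu_orth, ?_⟩
        apply Set.Subset.antisymm
        · apply H.spanL_subset
          · exact ⟨β₁, 1, hβ₁O, H.inO_one, by module⟩
          · exact ⟨β₂, lam, hβ₂O, hlam, by rw [← hlam_eq]; module⟩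
        · exact H.spanL_subset hb' hpu_mem
      · have hlam0 : lam ≠ 0 := by rintro rfl; exact hlam inO_zero
        have hlamv : 0 ≤ v lam⁻¹ := by
          rw [H.v_inv hlam0]
          rcases (not_or.1 hlam) with ⟨_, hh⟩
          omega
        have hpw0 : w - β₂ • b' ≠ 0 := by
          rw [hlam_eq]
          exact smul_ne_zero hlam0 hpu0
        refine ⟨w - β₂ • b', hpw0, hpw_orth, ?_⟩
        apply Set.Subset.antisymm
        · apply H.spanL_subset
          · refine ⟨β₁, lam⁻¹, hβ₁O, Or.inr hlamv, ?_⟩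
            rw [hlam_eq, smul_smul, inv_mul_cancel₀ hlam0]
            module
          · exact ⟨β₂, 1, hβ₂O, H.inO_one, by module⟩
        · exact H.spanL_subset hb' hpw_mem
  obtain ⟨c, hc0, horth, hEq⟩ := main
  have hind : LinearIndependent F ![b', c] := orth_indep hq' hc0 horth
  have hd' : dualL σ v (spanL v b' c) = spanL v b' c := by rw [← hEq]; exact hd
  have hdet := H.detInv0 hind hd'
  have hb'c : herm σ b' c = 0 := by
    rw [H.herm_conj c b', horth, map_zero]
  have hEqd : detG σ b' c = herm σ b' b' * herm σ c c := by
    rw [detG, hb'c]; ring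
  have hccne : herm σ c c ≠ 0 := by
    intro hz
    apply H.detG_ne_zero hind
    rw [hEqd, hz, mul_zero]
  refine ⟨c, hind, hEq, horth, hccne, ?_⟩
  rw [hEqd, H.hvmul _ _ hq' hccne, hq] at hdet
  omega

theorem uniq0 {Λ₁ Λ₂ : Set (F × F)} {b' : F × F} (h1 : IsVertex0 σ v Λ₁) (h2 : IsVertex0 σ v Λ₂)
    (hb1 : b' ∈ Λ₁) (hb2 : b' ∈ Λ₂) (hq' : herm σ b' b' ≠ 0) (hq : v (herm σ b' b') = 0) :
    Λ₁ = Λ₂ := by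
  obtain ⟨⟨u1, w1, hi1, rfl⟩, hd1⟩ := h1
  obtain ⟨⟨u2, w2, hi2, rfl⟩, hd2⟩ := h2
  obtain ⟨c1, hic1, hE1, ho1, hcc1, hv1⟩ := H.decomp hi1 hd1 hb1 hq' hq
  obtain ⟨c2, hic2, hE2, ho2, hcc2, hv2⟩ := H.decomp hi2 hd2 hb2 hq' hq
  rw [hE1, hE2]
  obtain ⟨γ, lam, hco⟩ := exists_coords hic1 c2
  have hγ : γ = 0 := by
    have h1 : herm σ c2 b' = γ * herm σ b' b' + lam * herm σ c1 b' := by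
      rw [hco, herm_add_left, herm_smul_left, herm_smul_left]
    rw [ho2, ho1, mul_zero, add_zero] at h1
    rcases mul_eq_zero.1 h1.symm with h | h
    · exact h
    · exact absurd h hq'
  have hc2 : c2 = lam • c1 := by rw [hco, hγ, zero_smul, zero_add]
  have hlam0 : lam ≠ 0 := by
    rintro rfl
    rw [zero_smul] at hc2
    refine hcc2 ?_
    rw [hc2]
    simp [herm]
  have hvlam : v lam = 0 := by
    have hcc : herm σ c2 c2 = lam * σ lam * herm σ c1 c1 := by
      rw [hc2, herm_smul_left, herm_smul_right]; ring
    have hv := congrArg v hcc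
    rw [hv2, H.hvmul _ _ (mul_ne_zero hlam0 (H.sig_ne hlam0)) hcc1,
        H.hvmul _ _ hlam0 (H.sig_ne hlam0), H.hvσ, hv1] at hv
    omega
  apply Set.Subset.antisymm
  · apply H.spanL_subset
    · exact H.left_mem_spanL b' c2
    · refine ⟨0, lam⁻¹, inO_zero, Or.inr (by rw [H.v_inv hlam0, hvlam]; norm_num), ?_⟩
      rw [hc2, smul_smul, inv_mul_cancel₀ hlam0, one_smul, zero_smul, zero_add]
  · apply H.spanL_subset
    · exact H.left_mem_spanL b' c1
    · exact ⟨0, lam, inO_zero, Or.inr (by rw [hvlam]), by rw [hc2, zero_smul, zero_add]⟩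

end GV

namespace GV
variable (H : S7.GV σ π v)
include H

theorem hullChar {P Λb : Set (F × F)} {b' : F × F} (h2 : IsVertex2 σ π v P) (hb' : b' ∈ P)
    (hq' : herm σ b' b' ≠ 0) (hq : v (herm σ b' b') = 0)
    (h0 : IsVertex0 σ v Λb) (hbb : b' ∈ Λb) : Λb ⊆ P := by
  obtain ⟨⟨u, w, hi, rfl⟩, hd⟩ := h2
  have hσπ : σ π ≠ 0 := H.sig_ne H.hπ
  have hprim : ¬∃ z ∈ spanL v u w, b' = π • z := by
    rintro ⟨z, hz, rfl⟩
    have hzz : herm σ z z ≠ 0 := by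
      intro h0z
      apply hq'
      rw [herm_smul_left, herm_smul_right, h0z, mul_zero, mul_zero]
    have hvge := H.gram2 hd hz hz
    rcases hvge with h | h
    · exact hzz h
    have hveq : v (herm σ (π • z) (π • z)) = 1 + (1 + v (herm σ z z)) := by
      rw [herm_smul_left, herm_smul_right,
        H.hvmul _ _ H.hπ (mul_ne_zero hσπ hzz),
        H.hvmul _ _ hσπ hzz, H.hvπ, H.hvσ, H.hvπ]
    rw [hq] at hveq
    omega
  obtain ⟨y, hiby, hE⟩ := H.extendPrim hi hb' hprim
  rw [hE] at hd hb' ⊢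
  have hdet := H.detInv2 hiby hd
  have hδne := H.detG_ne_zero hiby
  have hybσ : herm σ y b' = σ (herm σ b' y) := H.herm_conj b' y
  have hyyO : inO v (herm σ y y) :=
    H.inO_of_fixed (H.herm_self_fixed y)
      (H.gram2 hd (H.right_mem_spanL b' y) (H.right_mem_spanL b' y))
  have hq'O : inO v (herm σ b' b') := Or.inr (le_of_eq hq.symm)
  have hbyne : herm σ b' y ≠ 0 := by
    intro h0b
    have hEq : detG σ b' y = herm σ b' b' * herm σ y y := by
      rw [detG, h0b]; ring
    have hge : vge v (detG σ b' y) 0 := by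
      rw [hEq]; simpa using H.vge_mul (m := 0) (n := 0) hq'O hyyO
    rcases hge with hzz | hzz
    · exact hδne hzz
    · omega
  have hybne : herm σ y b' ≠ 0 := by rw [hybσ]; exact H.sig_ne hbyne
  have hvprod : v (herm σ b' y * herm σ y b') = -2 := by
    have h1 : herm σ b' y * herm σ y b' = -detG σ b' y + herm σ b' b' * herm σ y y := by
      rw [detG]; ring
    have h2 := H.v_add_eq (x := -detG σ b' y) (y := herm σ b' b' * herm σ y y)
      (neg_ne_zero.2 hδne) (by
        rw [H.v_neg, hdet]
        exact H.vge_mono (show (-2:ℤ)+1 ≤ 0 by omega)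
          (by simpa using H.vge_mul (m := 0) (n := 0) hq'O hyyO))
    rw [h1, h2.2, H.v_neg, hdet]
  have hvhby : v (herm σ b' y) = -1 := by
    have h3 := H.hvmul _ _ hbyne hybne
    rw [hvprod, hybσ, H.hvσ] at h3
    omega
  have hvhyb : v (herm σ y b') = -1 := by rw [hybσ, H.hvσ]; exact hvhby
  have hcoefO : inO v (-(π * herm σ y b' / herm σ b' b')) := by
    apply H.inO_neg
    apply H.vge_div_unit hq' hq
    have h5 : vge v (π * herm σ y b') (1 + (-1)) :=
      H.vge_mul H.vge_pi (Or.inr (le_of_eq hvhyb.symm))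
    simpa using h5
  have hc₀mem : (-(π * herm σ y b' / herm σ b' b')) • b' + π • y ∈ spanL v b' y :=
    ⟨_, _, hcoefO, H.vge_mono (by omega) H.vge_pi, rfl⟩
  set c₀ := (-(π * herm σ y b' / herm σ b' b')) • b' + π • y with hc₀def
  have hor : herm σ c₀ b' = 0 := by
    rw [hc₀def, herm_add_left, herm_smul_left, herm_smul_left]
    field_simp; ring
  have hval : herm σ c₀ c₀ = π * σ π * detG σ b' y / herm σ b' b' := by
    rw [hc₀def, herm_expand, detG]
    simp only [map_neg, map_div₀, map_mul]
    rw [H.herm_self_fixed b', show σ (herm σ y b') = herm σ b' y from by rw [hybσ, H.hinv]]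
    field_simp
    ring
  have hccne : herm σ c₀ c₀ ≠ 0 := by
    rw [hval]
    exact div_ne_zero (mul_ne_zero (mul_ne_zero H.hπ hσπ) hδne) hq'
  have hvc : v (herm σ c₀ c₀) = 0 := by
    rw [hval, div_eq_mul_inv,
      H.hvmul _ _ (mul_ne_zero (mul_ne_zero H.hπ hσπ) hδne) (inv_ne_zero hq'),
      H.hvmul _ _ (mul_ne_zero H.hπ hσπ) hδne,
      H.hvmul _ _ H.hπ hσπ, H.v_inv hq', H.hvπ, H.hvσ, H.hvπ, hdet, hq]
    norm_num
  have hc₀ne : c₀ ≠ 0 := by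
    intro h0
    apply hccne
    rw [h0]; simp [herm]
  have hindM : LinearIndependent F ![b', c₀] := orth_indep hq' hc₀ne hor
  have hb'c₀ : herm σ b' c₀ = 0 := by rw [H.herm_conj c₀ b', hor, map_zero]
  have hM0 : IsVertex0 σ v (spanL v b' c₀) := by
    refine ⟨⟨b', c₀, hindM, rfl⟩, ?_⟩
    apply H.crit0 hindM hq'O (by rw [hb'c₀]; exact inO_zero) (by rw [hor]; exact inO_zero)
      (Or.inr (le_of_eq hvc.symm))
    rw [detG, hb'c₀, zero_mul, sub_zero, H.hvmul _ _ hq' hccne, hq, hvc]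
    norm_num
  have hLM := H.uniq0 h0 hM0 hbb (H.left_mem_spanL b' c₀) hq' hq
  rw [hLM]
  exact H.spanL_subset (H.left_mem_spanL b' y) hc₀mem

end GV

theorem adjV_symm {σ : F →+* F} {π : F} {v : F → ℤ} {Λ Λ' : Set (F × F)}
    (h : AdjV σ π v Λ Λ') : AdjV σ π v Λ' Λ := by
  obtain ⟨h1, h2, h3, h4⟩ := h
  exact ⟨h2, h1, h3.symm, by rwa [Set.inter_comm]⟩

theorem walkN_zero (σ : F →+* F) (π : F) (v : F → ℤ) (P : Set (F × F)) : WalkN σ π v 0 P P :=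
  ⟨fun _ => P, rfl, rfl, by omega⟩

theorem walk_symm {σ : F →+* F} {π : F} {v : F → ℤ} {k : ℕ} {P Q : Set (F × F)}
    (h : WalkN σ π v k P Q) : WalkN σ π v k Q P := by
  obtain ⟨f, h0, hk, hadj⟩ := h
  refine ⟨fun i => f (k - i), by simpa using hk, by simpa using h0, ?_⟩
  intro i hi
  have h1 : k - (i + 1) < k := by omega
  have h2 : (k - (i + 1)) + 1 = k - i := by omega
  have := hadj (k - (i + 1)) h1
  rw [h2] at this
  exact adjV_symm this

theorem walk_prepend {σ : F →+* F} {π : F} {v : F → ℤ} {P P' Q : Set (F × F)} {j : ℕ}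
    (hadj : AdjV σ π v P P') (h : WalkN σ π v j P' Q) : WalkN σ π v (j + 1) P Q := by
  obtain ⟨f, h0, hk, hstep⟩ := h
  refine ⟨fun i => if i = 0 then P else f (i - 1), by simp, ?_, ?_⟩
  · simp only [Nat.succ_ne_zero, if_false]
    simpa using hk
  intro i hi
  rcases Nat.eq_zero_or_pos i with rfl | hpos
  · simpa [h0] using hadj
  · have h1 : i ≠ 0 := by omega
    have h2 : i + 1 ≠ 0 := by omega
    simp only [h1, h2, if_false]
    have := hstep (i - 1) (by omega)
    have h3 : i - 1 + 1 = i := by omega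
    rw [h3] at this
    simpa [show i + 1 - 1 = i from by omega] using this

namespace GV
variable (H : S7.GV σ π v)
include H

theorem inO_pi_mul {z : F} (hz : vge v z (-1)) : inO v (π * z) := by
  have := H.vge_mul H.vge_pi hz
  exact (by simpa using this : vge v _ 0)

theorem adj_step {Λ Λ' : Set (F × F)} (h : AdjV σ π v Λ Λ') {x : F × F} (hx : x ∈ Λ) :
    π • x ∈ Λ' := by
  obtain ⟨h1, h2, hne, h0⟩ := h
  have hdx : π • x ∈ dualL σ v Λ := by
    intro y hy
    rw [herm_smul_left]
    exact H.inO_pi_mul (H.gram2 h1.2 hx hy)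
  have step1 : dualL σ v Λ ⊆ dualL σ v (Λ ∩ Λ') := dualL_antitone Set.inter_subset_left
  have h3 := step1 hdx
  rw [h0.2] at h3
  exact h3.2

theorem walk_pi {k : ℕ} {P Q : Set (F × F)} (h : WalkN σ π v k P Q) {x : F × F} (hx : x ∈ P) :
    (π ^ (k : ℤ)) • x ∈ Q := by
  obtain ⟨f, h0, hk, hadj⟩ := h
  have key : ∀ i ≤ k, (π ^ (i : ℤ)) • x ∈ f i := by
    intro i
    induction i with
    | zero =>
      intro _
      simpa [h0] using hx
    | succ n ih =>
      intro hik
      have hn := ih (by omega)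
      have hstep := H.adj_step (hadj n (by omega)) hn
      rw [smul_smul, mul_comm, ← zpow_add_one₀ H.hπ] at hstep
      have hc : ((n : ℤ) + 1) = ((n + 1 : ℕ) : ℤ) := by push_cast; ring
      rwa [hc] at hstep
  have := key k le_rfl
  rwa [hk] at this

end GV

theorem detG_smul (σ : F →+* F) (c d : F) (x y : F × F) :
    detG σ (c • x) (d • y) = (c * σ c) * ((d * σ d) * detG σ x y) := by
  simp only [detG, herm_smul_left, herm_smul_right]; ring

theorem detG_smul_right (σ : F →+* F) (d : F) (x y : F × F) :
    detG σ x (d • y) = (d * σ d) * detG σ x y := by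
  simp only [detG, herm_smul_left, herm_smul_right]; ring

theorem indep_smul {x y : F × F} {c d : F} (hc : c ≠ 0) (hd : d ≠ 0)
    (h : LinearIndependent F ![x, y]) : LinearIndependent F ![c • x, d • y] := by
  rw [LinearIndependent.pair_iff] at h ⊢
  intro s t hst
  have h2 := h (s * c) (t * d) (by rw [← smul_smul, ← smul_smul]; exact hst)
  constructor
  · rcases mul_eq_zero.1 h2.1 with hh | hh
    · exact hh
    · exact absurd hh hc
  · rcases mul_eq_zero.1 h2.2 with hh | hh
    · exact hh
    · exact absurd hh hd

namespace GV
variable (H : S7.GV σ π v)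
include H

theorem neighbor {P : Set (F × F)} (hP : IsVertex2 σ π v P) {b₁ : F × F}
    (hb₁P : b₁ ∈ P) (hb₁prim : π⁻¹ • b₁ ∉ P) (hb₁ne : b₁ ≠ 0)
    (hqne : herm σ b₁ b₁ ≠ 0) (hv2le : 2 ≤ v (herm σ b₁ b₁)) :
    ∃ P', AdjV σ π v P P' ∧ π⁻¹ • b₁ ∈ P' := by
  obtain ⟨⟨u, w, hi, rfl⟩, hd⟩ := hP
  have hσπ : σ π ≠ 0 := H.sig_ne H.hπ
  set q₁ := herm σ b₁ b₁ with hq₁def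
  have hw₀ex : ∃ w₀ ∈ spanL v u w, ¬ inO v (herm σ b₁ w₀) := by
    by_contra hcon
    push_neg at hcon
    have hmem : b₁ ∈ dualL σ v (spanL v u w) := fun y hy => hcon y hy
    rw [hd] at hmem
    obtain ⟨z, hz, hzeq⟩ := hmem
    apply hb₁prim
    have hzz : π⁻¹ • b₁ = z := by
      rw [← hzeq, smul_smul, inv_mul_cancel₀ H.hπ, one_smul]
    rw [hzz]; exact hz
  obtain ⟨w₀, hw₀P, hw₀not⟩ := hw₀ex
  have hbw_ne : herm σ b₁ w₀ ≠ 0 := by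
    intro h0; exact hw₀not (h0 ▸ inO_zero)
  have hbw_ge := H.gram2 hd hb₁P hw₀P
  have hbw_v : v (herm σ b₁ w₀) = -1 := by
    rcases hbw_ge with h | h
    · exact absurd h hbw_ne
    have : ¬ (0 ≤ v (herm σ b₁ w₀)) := fun hh => hw₀not (Or.inr hh)
    omega
  have hwb_eq : herm σ w₀ b₁ = σ (herm σ b₁ w₀) := H.herm_conj b₁ w₀
  have hwb_ne : herm σ w₀ b₁ ≠ 0 := by rw [hwb_eq]; exact H.sig_ne hbw_ne
  have hwb_v : v (herm σ w₀ b₁) = -1 := by rw [hwb_eq, H.hvσ]; exact hbw_v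
  have hww_ge : vge v (herm σ w₀ w₀) (-1) := H.gram2 hd hw₀P hw₀P
  have hind : LinearIndependent F ![b₁, w₀] := by
    rw [LinearIndependent.pair_iff]
    intro s t hst
    rcases eq_or_ne t 0 with rfl | ht
    · rw [zero_smul, add_zero] at hst
      rcases smul_eq_zero.1 hst with h | h
      · exact ⟨h, rfl⟩
      · exact absurd h hb₁ne
    · exfalso
      set lam := -(s / t) with hlam
      have h5 : t • w₀ = -(s • b₁) := eq_neg_of_add_eq_zero_right hst
      have hw₀eq : w₀ = lam • b₁ := by
        calc w₀ = t⁻¹ • (t • w₀) := by rw [smul_smul, inv_mul_cancel₀ ht, one_smul]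
        _ = lam • b₁ := by
            rw [h5, smul_neg, smul_smul, ← neg_smul, hlam]
            congr 1
            rw [div_eq_mul_inv]; ring
      have hlamne : lam ≠ 0 := by
        intro h0
        rw [hw₀eq, h0, zero_smul] at hbw_ne
        exact hbw_ne (herm_zero_right σ b₁)
      have hv1 : v (herm σ b₁ w₀) = v (σ lam) + v q₁ := by
        rw [hw₀eq, herm_smul_right, H.hvmul _ _ (H.sig_ne hlamne) hqne]
      have hv2 : v (herm σ w₀ w₀) = v lam + (v (σ lam) + v q₁) := by
        rw [hw₀eq, herm_smul_left, herm_smul_right,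
          H.hvmul _ _ hlamne (mul_ne_zero (H.sig_ne hlamne) hqne),
          H.hvmul _ _ (H.sig_ne hlamne) hqne]
      have hwwne : herm σ w₀ w₀ ≠ 0 := by
        rw [hw₀eq, herm_smul_left, herm_smul_right]
        exact mul_ne_zero hlamne (mul_ne_zero (H.sig_ne hlamne) hqne)
      have hσl : v (σ lam) = v lam := H.hvσ lam
      rcases hww_ge with h | h
      · exact hwwne h
      · rw [hbw_v] at hv1
        omega
  have hdetbw : v (detG σ b₁ w₀) = -2 := by
    have h1 : detG σ b₁ w₀ = -(herm σ b₁ w₀ * herm σ w₀ b₁) + q₁ * herm σ w₀ w₀ := by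
      rw [detG]; ring
    have hprodne : herm σ b₁ w₀ * herm σ w₀ b₁ ≠ 0 := mul_ne_zero hbw_ne hwb_ne
    have hprodv : v (herm σ b₁ w₀ * herm σ w₀ b₁) = -2 := by
      rw [H.hvmul _ _ hbw_ne hwb_ne, hbw_v, hwb_v]
      norm_num
    have h2 := H.v_add_eq (x := -(herm σ b₁ w₀ * herm σ w₀ b₁)) (y := q₁ * herm σ w₀ w₀)
      (neg_ne_zero.2 hprodne) (by
        rw [H.v_neg, hprodv]
        refine H.vge_mono (show (-2:ℤ) + 1 ≤ 2 + -1 by omega) ?_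
        exact H.vge_mul (Or.inr hv2le) hww_ge)
    rw [h1, h2.2, H.v_neg, hprodv]
  have hdetbwne : detG σ b₁ w₀ ≠ 0 := H.detG_ne_zero hind
  have hindP' : LinearIndependent F ![π⁻¹ • b₁, π • w₀] :=
    indep_smul (inv_ne_zero H.hπ) H.hπ hind
  have hvq₁ : vge v q₁ 2 := Or.inr hv2le
  have hπinv : vge v π⁻¹ (-1) := Or.inr (le_of_eq (by rw [H.v_inv H.hπ, H.hvπ]))
  have hσπinv : vge v (σ π⁻¹) (-1) := H.vge_sigma hπinv
  have hσπ1 : vge v (σ π) 1 := H.vge_sigma H.vge_pi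
  have hπO : inO v π := H.vge_mono (show (0:ℤ) ≤ 1 by omega) H.vge_pi
  have e11 : herm σ (π⁻¹ • b₁) (π⁻¹ • b₁) = π⁻¹ * (σ π⁻¹ * q₁) := by
    rw [herm_smul_left, herm_smul_right]
  have e12 : herm σ (π⁻¹ • b₁) (π • w₀) = π⁻¹ * (σ π * herm σ b₁ w₀) := by
    rw [herm_smul_left, herm_smul_right]
  have e21 : herm σ (π • w₀) (π⁻¹ • b₁) = π * (σ π⁻¹ * herm σ w₀ b₁) := by
    rw [herm_smul_left, herm_smul_right]
  have e22 : herm σ (π • w₀) (π • w₀) = π * (σ π * herm σ w₀ w₀) := by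
    rw [herm_smul_left, herm_smul_right]
  have ge11 : vge v (herm σ (π⁻¹ • b₁) (π⁻¹ • b₁)) (-1) := by
    rw [e11]
    exact H.vge_mono (show (-1:ℤ) ≤ -1 + (-1 + 2) by omega)
      (H.vge_mul hπinv (H.vge_mul hσπinv hvq₁))
  have ge12 : vge v (herm σ (π⁻¹ • b₁) (π • w₀)) (-1) := by
    rw [e12]
    exact H.vge_mono (show (-1:ℤ) ≤ -1 + (1 + -1) by omega)
      (H.vge_mul hπinv (H.vge_mul hσπ1 (Or.inr (le_of_eq hbw_v.symm))))
  have ge21 : vge v (herm σ (π • w₀) (π⁻¹ • b₁)) (-1) := by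
    rw [e21]
    exact H.vge_mono (show (-1:ℤ) ≤ 1 + (-1 + -1) by omega)
      (H.vge_mul H.vge_pi (H.vge_mul hσπinv (Or.inr (le_of_eq hwb_v.symm))))
  have ge22 : vge v (herm σ (π • w₀) (π • w₀)) (-1) := by
    rw [e22]
    exact H.vge_mono (show (-1:ℤ) ≤ 1 + (1 + -1) by omega)
      (H.vge_mul H.vge_pi (H.vge_mul hσπ1 hww_ge))
  have hdetP' : v (detG σ (π⁻¹ • b₁) (π • w₀)) = -2 := by
    rw [detG_smul, show (π⁻¹ * σ π⁻¹) * ((π * σ π) * detG σ b₁ w₀) = detG σ b₁ w₀ from by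
      rw [map_inv₀]
      field_simp
      exact div_self H.hπ]
    exact hdetbw
  have hP'2 : IsVertex2 σ π v (spanL v (π⁻¹ • b₁) (π • w₀)) :=
    ⟨⟨_, _, hindP', rfl⟩, H.crit2 hindP' ge11 ge12 ge21 ge22 hdetP'⟩
  have hindM : LinearIndependent F ![b₁, π • w₀] := by
    have := indep_smul one_ne_zero H.hπ hind
    simpa using this
  have gm11 : inO v q₁ := Or.inr (by omega)
  have gm12 : inO v (herm σ b₁ (π • w₀)) := by
    rw [herm_smul_right]
    have := H.vge_mul hσπ1 (Or.inr (le_of_eq hbw_v.symm))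
    exact (by simpa using this : vge v _ 0)
  have gm21 : inO v (herm σ (π • w₀) b₁) := by
    rw [herm_smul_left]
    have := H.vge_mul H.vge_pi (Or.inr (le_of_eq hwb_v.symm))
    exact (by simpa using this : vge v _ 0)
  have gm22 : inO v (herm σ (π • w₀) (π • w₀)) := by
    rw [e22]
    exact H.vge_mono (show (0:ℤ) ≤ 1 + (1 + -1) by omega)
      (H.vge_mul H.vge_pi (H.vge_mul hσπ1 hww_ge))
  have hdetM : v (detG σ b₁ (π • w₀)) = 0 := by
    rw [detG_smul_right, H.hvmul _ _ (mul_ne_zero H.hπ hσπ) hdetbwne,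
      H.hvmul _ _ H.hπ hσπ, H.hvπ, H.hvσ, H.hvπ, hdetbw]
    norm_num
  have hM0 : IsVertex0 σ v (spanL v b₁ (π • w₀)) :=
    ⟨⟨_, _, hindM, rfl⟩, H.crit0 hindM gm11 gm12 gm21 gm22 hdetM⟩
  have hπw₀P : π • w₀ ∈ spanL v u w := H.smul_mem_spanL hw₀P hπO
  have hb₁P' : b₁ ∈ spanL v (π⁻¹ • b₁) (π • w₀) :=
    ⟨π, 0, hπO, inO_zero, by
      rw [smul_smul, mul_inv_cancel₀ H.hπ, one_smul, zero_smul, add_zero]⟩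
  have hMeq : spanL v b₁ (π • w₀) = spanL v u w ∩ spanL v (π⁻¹ • b₁) (π • w₀) := by
    apply Set.Subset.antisymm
    · intro x hx
      exact ⟨H.spanL_subset hb₁P hπw₀P hx, H.spanL_subset hb₁P' (H.right_mem_spanL _ _) hx⟩
    · rintro x ⟨hxP, s, t, hs, ht, rfl⟩
      have hxw : vge v (herm σ (s • (π⁻¹ • b₁) + t • (π • w₀)) w₀) (-1) := H.gram2 hd hxP hw₀P
      have hexp : herm σ (s • (π⁻¹ • b₁) + t • (π • w₀)) w₀
          = s * (π⁻¹ * herm σ b₁ w₀) + t * (π * herm σ w₀ w₀) := by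
        rw [herm_add_left, herm_smul_left, herm_smul_left, herm_smul_left, herm_smul_left]
      rcases eq_or_ne s 0 with rfl | hs0
      · exact ⟨0, t, inO_zero, ht, by simp⟩
      · have hterm2 : vge v (t * (π * herm σ w₀ w₀)) 0 := by
          have := H.vge_mul ht (H.vge_mul H.vge_pi hww_ge)
          simpa using this
        have hterm1 : vge v (s * (π⁻¹ * herm σ b₁ w₀)) (-1) := by
          have heq2 : s * (π⁻¹ * herm σ b₁ w₀)
              = herm σ (s • (π⁻¹ • b₁) + t • (π • w₀)) w₀ - t * (π * herm σ w₀ w₀) := by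
            rw [hexp]; ring
          rw [heq2]
          exact H.vge_sub hxw (H.vge_mono (show (-1:ℤ) ≤ 0 by omega) hterm2)
        have hsv : 1 ≤ v s := by
          have hne1 : s * (π⁻¹ * herm σ b₁ w₀) ≠ 0 :=
            mul_ne_zero hs0 (mul_ne_zero (inv_ne_zero H.hπ) hbw_ne)
          rcases hterm1 with h | h
          · exact absurd h hne1
          rw [H.hvmul _ _ hs0 (mul_ne_zero (inv_ne_zero H.hπ) hbw_ne),
            H.hvmul _ _ (inv_ne_zero H.hπ) hbw_ne, H.v_inv H.hπ, H.hvπ, hbw_v] at h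
          omega
        refine ⟨s / π, t, ?_, ht, ?_⟩
        · have := H.vge_div H.hπ (Or.inr hsv : vge v s 1)
          rw [H.hvπ] at this
          exact (by simpa using this : vge v _ 0)
        · rw [smul_smul, div_eq_mul_inv]
  have hne : spanL v u w ≠ spanL v (π⁻¹ • b₁) (π • w₀) := by
    intro hEq
    apply hb₁prim
    rw [hEq]
    exact H.left_mem_spanL _ _
  refine ⟨spanL v (π⁻¹ • b₁) (π • w₀), ⟨⟨⟨u, w, hi, rfl⟩, hd⟩, hP'2, hne, ?_⟩,
    H.left_mem_spanL _ _⟩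
  rw [← hMeq]
  exact hM0

end GV

namespace GV
variable (H : S7.GV σ π v)
include H

theorem zpow_smul_smul (i j : ℤ) (x : F × F) :
    (π ^ i) • ((π ^ j) • x) = (π ^ (i + j)) • x := by
  rw [smul_smul, ← zpow_add₀ H.hπ]

theorem v_herm_zpow {b : F × F} (hqne : herm σ b b ≠ 0) (k : ℤ) :
    herm σ ((π ^ k) • b) ((π ^ k) • b) ≠ 0 ∧
    v (herm σ ((π ^ k) • b) ((π ^ k) • b)) = 2 * k + v (herm σ b b) := by
  have hc : (π ^ k) ≠ 0 := zpow_ne_zero _ H.hπ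
  constructor
  · rw [herm_smul_left, herm_smul_right]
    exact mul_ne_zero hc (mul_ne_zero (H.sig_ne hc) hqne)
  · rw [herm_smul_left, herm_smul_right, H.hvmul _ _ hc (mul_ne_zero (H.sig_ne hc) hqne),
      H.hvmul _ _ (H.sig_ne hc) hqne, H.hvσ, H.v_zpow]
    ring

theorem walk_to_hull {α : ℤ} {b : F × F} (hbne : b ≠ 0) (hqne : herm σ b b ≠ 0)
    (hq : v (herm σ b b) = 2 * α)
    {Λb : Set (F × F)} (h0 : IsVertex0 σ v Λb) (hbb : (π ^ (-α)) • b ∈ Λb) :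
    ∀ j : ℕ, ∀ P : Set (F × F), IsVertex2 σ π v P → (π ^ ((j : ℤ) - α)) • b ∈ P →
      ∃ Q, IsVertex2 σ π v Q ∧ Λb ⊆ Q ∧ ∃ j' ≤ j, WalkN σ π v j' P Q := by
  intro j
  induction j with
  | zero =>
    intro P hP hbP
    refine ⟨P, hP, ?_, 0, le_rfl, walkN_zero σ π v P⟩
    rw [show ((0:ℕ):ℤ) - α = -α by simp] at hbP
    have hfacts := H.v_herm_zpow hqne (-α)
    exact H.hullChar hP hbP hfacts.1 (by rw [hfacts.2, hq]; ring) h0 hbb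
  | succ n ih =>
    intro P hP hbP
    by_cases hin : (π ^ ((n : ℤ) - α)) • b ∈ P
    · obtain ⟨Q, hQ2, hQb, j', hj', hw⟩ := ih P hP hin
      exact ⟨Q, hQ2, hQb, j', by omega, hw⟩
    · have hconv : π⁻¹ • ((π ^ (((n+1 : ℕ) : ℤ) - α)) • b) = (π ^ ((n : ℤ) - α)) • b := by
        rw [show (π⁻¹ : F) = π ^ (-1 : ℤ) from (zpow_neg_one π).symm, H.zpow_smul_smul,
          show (-1 : ℤ) + (((n+1 : ℕ) : ℤ) - α) = (n : ℤ) - α from by push_cast; ring]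
      have hprim : π⁻¹ • ((π ^ (((n+1 : ℕ) : ℤ) - α)) • b) ∉ P := by
        rw [hconv]; exact hin
      have hfacts := H.v_herm_zpow hqne (((n+1 : ℕ) : ℤ) - α)
      have hb₁ne : (π ^ (((n+1 : ℕ) : ℤ) - α)) • b ≠ 0 :=
        smul_ne_zero (zpow_ne_zero _ H.hπ) hbne
      have hv2 : 2 ≤ v (herm σ ((π ^ (((n+1 : ℕ) : ℤ) - α)) • b)
          ((π ^ (((n+1 : ℕ) : ℤ) - α)) • b)) := by
        rw [hfacts.2, hq]; push_cast; omega
      obtain ⟨P', hadj, hbP'⟩ := H.neighbor hP hbP hprim hb₁ne hfacts.1 hv2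
      rw [hconv] at hbP'
      obtain ⟨Q, hQ2, hQb, j', hj', hw⟩ := ih P' hadj.2.1 hbP'
      exact ⟨Q, hQ2, hQb, j' + 1, by omega, walk_prepend hadj hw⟩

end GV

theorem detG_smul_left (σ : F →+* F) (c : F) (x y : F × F) :
    detG σ (c • x) y = (c * σ c) * detG σ x y := by
  simp only [detG, herm_smul_left, herm_smul_right]; ring

namespace GV
variable (H : S7.GV σ π v)
include H

theorem hull_of_type0 {Λ : Set (F × F)} (hΛ0 : IsVertex0 σ v Λ) {b₂ : F × F}
    (hb₂ : b₂ ∈ Λ) (hprim : π⁻¹ • b₂ ∉ Λ) (hb₂ne : b₂ ≠ 0)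
    (hqne : herm σ b₂ b₂ ≠ 0) (hv2 : 2 ≤ v (herm σ b₂ b₂)) :
    ∃ P, IsVertex2 σ π v P ∧ Λ ⊆ P ∧ π⁻¹ • b₂ ∈ P := by
  obtain ⟨⟨u, w, hi, rfl⟩, hd⟩ := hΛ0
  have hprim' : ¬∃ z ∈ spanL v u w, b₂ = π • z := by
    rintro ⟨z, hz, rfl⟩
    apply hprim
    rw [smul_smul, inv_mul_cancel₀ H.hπ, one_smul]
    exact hz
  obtain ⟨y, hiy, hE⟩ := H.extendPrim hi hb₂ hprim'
  rw [hE] at hd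
  have g12 : inO v (herm σ b₂ y) := gram0 hd (H.left_mem_spanL b₂ y) (H.right_mem_spanL b₂ y)
  have g21 : inO v (herm σ y b₂) := gram0 hd (H.right_mem_spanL b₂ y) (H.left_mem_spanL b₂ y)
  have g22 : inO v (herm σ y y) := gram0 hd (H.right_mem_spanL b₂ y) (H.right_mem_spanL b₂ y)
  have hdet0 := H.detInv0 hiy hd
  have hδne := H.detG_ne_zero hiy
  have hπinv : vge v π⁻¹ (-1) := Or.inr (le_of_eq (by rw [H.v_inv H.hπ, H.hvπ]))
  have hσπinv : vge v (σ π⁻¹) (-1) := H.vge_sigma hπinv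
  have hπO : inO v π := H.vge_mono (show (0:ℤ) ≤ 1 by omega) H.vge_pi
  have hiP : LinearIndependent F ![π⁻¹ • b₂, y] := by
    have := indep_smul (inv_ne_zero H.hπ) one_ne_zero hiy
    simpa using this
  have ge11 : vge v (herm σ (π⁻¹ • b₂) (π⁻¹ • b₂)) (-1) := by
    rw [herm_smul_left, herm_smul_right]
    exact H.vge_mono (show (-1:ℤ) ≤ -1 + (-1 + 2) by omega)
      (H.vge_mul hπinv (H.vge_mul hσπinv (Or.inr hv2)))
  have ge12 : vge v (herm σ (π⁻¹ • b₂) y) (-1) := by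
    rw [herm_smul_left]
    have := H.vge_mul hπinv g12
    simpa using this
  have ge21 : vge v (herm σ y (π⁻¹ • b₂)) (-1) := by
    rw [herm_smul_right]
    have := H.vge_mul hσπinv g21
    simpa using this
  have ge22 : vge v (herm σ y y) (-1) := H.vge_mono (by omega) g22
  have hdetP : v (detG σ (π⁻¹ • b₂) y) = -2 := by
    rw [detG_smul_left, H.hvmul _ _ (mul_ne_zero (inv_ne_zero H.hπ)
      (H.sig_ne (inv_ne_zero H.hπ))) hδne,
      H.hvmul _ _ (inv_ne_zero H.hπ) (H.sig_ne (inv_ne_zero H.hπ)),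
      H.v_inv H.hπ, H.hvσ, H.v_inv H.hπ, H.hvπ, hdet0]
    norm_num
  have hP2 : IsVertex2 σ π v (spanL v (π⁻¹ • b₂) y) :=
    ⟨⟨_, _, hiP, rfl⟩, H.crit2 hiP ge11 ge12 ge21 ge22 hdetP⟩
  have hb₂P : b₂ ∈ spanL v (π⁻¹ • b₂) y :=
    ⟨π, 0, hπO, inO_zero, by
      rw [smul_smul, mul_inv_cancel₀ H.hπ, one_smul, zero_smul, add_zero]⟩
  refine ⟨spanL v (π⁻¹ • b₂) y, hP2, ?_, H.left_mem_spanL _ _⟩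
  rw [hE]
  exact H.spanL_subset hb₂P (H.right_mem_spanL _ _)

end GV

end S7

open S7 S7.GV in
theorem statement7
    (σ : F →+* F) (π : F) (v : F → ℤ)
    (hinv : ∀ x, σ (σ x) = x)
    (hσπ : σ π = -π)
    (hπ : π ≠ 0)
    (h2 : (2 : F) ≠ 0)
    (hvπ : v π = 1)
    (hv2 : v (2 : F) = 0)
    (hvσ : ∀ x, v (σ x) = v x)
    (hvmul : ∀ x y : F, x ≠ 0 → y ≠ 0 → v (x * y) = v x + v y)
    (hvadd : ∀ x y : F, x ≠ 0 → y ≠ 0 → x + y ≠ 0 → min (v x) (v y) ≤ v (x + y))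
    (heven : ∀ x : F, σ x = x → x ≠ 0 → Even (v x))
    (b : F × F) (hb : herm σ b b ≠ 0) :
    (¬ inO v (herm σ b b) → ∀ Λ : Set (F × F), IsVertex σ π v Λ → b ∉ Λ) ∧
    (inO v (herm σ b b) → ∀ α : ℤ, v (herm σ b b) = 2 * α →
      ∀ Λb : Set (F × F), IsVertex0 σ v Λb →
        (π ^ (-α)) • b ∈ Λb → (π ^ (-α)) • b ∉ (fun x => π • x) '' Λb →
        ∀ Λ : Set (F × F), IsVertex σ π v Λ →
          (b ∈ Λ ↔ ∃ m : ℕ, DTwice σ π v Λ Λb m ∧ (m : ℤ) ≤ 2 * α + 1)) := by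
  have H : S7.GV σ π v := ⟨hinv, hπ, hvπ, hvσ, hvmul, hvadd, heven⟩
  have hbne : b ≠ 0 := by
    intro h0
    apply hb
    rw [h0]
    simp [herm]
  constructor
  · intro hnot Λ hΛ hbΛ
    apply hnot
    rcases hΛ with h0 | h2'
    · exact gram0 h0.2 hbΛ hbΛ
    · exact H.inO_of_fixed (H.herm_self_fixed b) (H.gram2 h2'.2 hbΛ hbΛ)
  · intro hinO α hα Λb hΛb0 hbbmem _hbbprim Λ hΛ
    have hαnn : 0 ≤ α := by
      rcases hinO with h0 | h0
      · exact absurd h0 hb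
      · omega
    have hfacts := H.v_herm_zpow hb (-α)
    have hq'ne : herm σ ((π ^ (-α)) • b) ((π ^ (-α)) • b) ≠ 0 := hfacts.1
    have hq'v : v (herm σ ((π ^ (-α)) • b) ((π ^ (-α)) • b)) = 0 := by
      rw [hfacts.2, hα]; ring
    constructor
    · intro hbΛ
      rcases hΛ with hΛ0 | hΛ2
      · by_cases hEq : Λ = Λb
        · exact ⟨0, Or.inl ⟨hEq, rfl⟩, by push_cast; omega⟩
        · have hSne : (π ^ ((α.toNat : ℤ) - α)) • b ∈ Λ := by
            rw [show ((α.toNat : ℤ) - α) = 0 by omega, zpow_zero, one_smul]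
            exact hbΛ
          have hex : ∃ j : ℕ, (π ^ ((j : ℤ) - α)) • b ∈ Λ := ⟨α.toNat, hSne⟩
          have hj₀S : (π ^ ((Nat.find hex : ℤ) - α)) • b ∈ Λ := Nat.find_spec hex
          have hj₀le : Nat.find hex ≤ α.toNat := Nat.find_le hSne
          set j₀ := Nat.find hex with hj₀def
          have hj₀pos : 1 ≤ j₀ := by
            rcases Nat.eq_zero_or_pos j₀ with h0 | hp
            · exfalso
              apply hEq
              apply H.uniq0 hΛ0 hΛb0 ?_ hbbmem hq'ne hq'v
              have := hj₀S
              rw [h0] at this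
              rw [show (((0:ℕ) : ℤ) - α) = -α by simp] at this
              exact this
            · exact hp
          have hb₂prim : π⁻¹ • ((π ^ ((j₀ : ℤ) - α)) • b) ∉ Λ := by
            have hmin := Nat.find_min hex (show j₀ - 1 < j₀ by omega)
            intro hcon
            apply hmin
            show (π ^ (((j₀ - 1 : ℕ) : ℤ) - α)) • b ∈ Λ
            rw [show (((j₀ - 1 : ℕ) : ℤ) - α) = (-1) + ((j₀ : ℤ) - α) by omega,
              ← H.zpow_smul_smul, zpow_neg_one]
            exact hcon
          have hb₂facts := H.v_herm_zpow hb ((j₀ : ℤ) - α)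
          have hb₂v : v (herm σ ((π ^ ((j₀ : ℤ) - α)) • b) ((π ^ ((j₀ : ℤ) - α)) • b))
              = 2 * j₀ := by
            rw [hb₂facts.2, hα]; push_cast; ring
          obtain ⟨P, hP2, hΛP, hb₂P⟩ := H.hull_of_type0 hΛ0 hj₀S hb₂prim
            (smul_ne_zero (zpow_ne_zero _ H.hπ) hbne) hb₂facts.1 (by rw [hb₂v]; omega)
          have hbP : (π ^ (((α.toNat - 1 : ℕ) : ℤ) - α)) • b ∈ P := by
            have hc : (((α.toNat - 1 : ℕ) : ℤ) - α) = (α - (j₀ : ℤ)) + ((j₀ : ℤ) - α - 1) := by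
              omega
            rw [hc, ← H.zpow_smul_smul,
              show ((j₀ : ℤ) - α - 1) = (-1) + ((j₀ : ℤ) - α) by ring,
              ← H.zpow_smul_smul, zpow_neg_one]
            exact latt_smul_mem H hP2.1 hb₂P (H.inO_zpow (by omega))
          obtain ⟨Q, hQ2, hQsub, j', hj', hw⟩ :=
            H.walk_to_hull hbne hb hα hΛb0 hbbmem (α.toNat - 1) P hP2 hbP
          have hmemS : j' ∈ {j : ℕ | ∃ P' Q', HullOf σ π v Λ P' ∧ HullOf σ π v Λb Q' ∧
              WalkN σ π v j P' Q'} :=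
            ⟨P, Q, Or.inr ⟨hΛ0, hP2, hΛP⟩, Or.inr ⟨hΛb0, hQ2, hQsub⟩, hw⟩
          refine ⟨2 * sInf {j : ℕ | ∃ P' Q', HullOf σ π v Λ P' ∧ HullOf σ π v Λb Q' ∧
              WalkN σ π v j P' Q'} + 2,
            Or.inr ⟨hEq, _, ⟨Nat.sInf_mem ⟨j', hmemS⟩, fun b' hb' => Nat.sInf_le hb'⟩, ?_⟩, ?_⟩
          · rw [if_pos hΛ0, if_pos hΛb0]; push_cast; ring
          · have hk := Nat.sInf_le hmemS
            push_cast
            omega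
      · have hEq : Λ ≠ Λb := by
          intro h
          exact H.notBoth (h ▸ hΛb0) hΛ2
        have hbΛ' : (π ^ ((α.toNat : ℤ) - α)) • b ∈ Λ := by
          rw [show ((α.toNat : ℤ) - α) = 0 by omega, zpow_zero, one_smul]
          exact hbΛ
        obtain ⟨Q, hQ2, hQsub, j', hj', hw⟩ :=
          H.walk_to_hull hbne hb hα hΛb0 hbbmem α.toNat Λ hΛ2 hbΛ'
        have hmemS : j' ∈ {j : ℕ | ∃ P' Q', HullOf σ π v Λ P' ∧ HullOf σ π v Λb Q' ∧
            WalkN σ π v j P' Q'} :=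
          ⟨Λ, Q, Or.inl ⟨hΛ2, rfl⟩, Or.inr ⟨hΛb0, hQ2, hQsub⟩, hw⟩
        refine ⟨2 * sInf {j : ℕ | ∃ P' Q', HullOf σ π v Λ P' ∧ HullOf σ π v Λb Q' ∧
            WalkN σ π v j P' Q'} + 1,
          Or.inr ⟨hEq, _, ⟨Nat.sInf_mem ⟨j', hmemS⟩, fun b' hb' => Nat.sInf_le hb'⟩, ?_⟩, ?_⟩
        · rw [if_neg (fun h => H.notBoth h hΛ2), if_pos hΛb0]; push_cast; ring
        · have hk := Nat.sInf_le hmemS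
          push_cast
          omega
    · rintro ⟨m, hDT, hmle⟩
      rcases hDT with ⟨hEq, rfl⟩ | ⟨hNe, k, hleast, hmeq⟩
      · rw [hEq]
        have := latt_smul_mem H hΛb0.1 hbbmem (H.inO_zpow hαnn)
        rwa [H.zpow_smul_smul, show α + -α = 0 from by omega, zpow_zero, one_smul] at this
      · obtain ⟨P, Q, hHP, hHQ, hwalk⟩ := hleast.1
        have hQ : IsVertex2 σ π v Q ∧ Λb ⊆ Q := by
          rcases hHQ with ⟨h2', _⟩ | ⟨_, hQ2, hsub⟩
          · exact absurd hΛb0 (fun hh => H.notBoth hh h2')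
          · exact ⟨hQ2, hsub⟩
        have hbP : (π ^ (k : ℤ)) • ((π ^ (-α)) • b) ∈ P :=
          H.walk_pi (walk_symm hwalk) (hQ.2 hbbmem)
        rw [H.zpow_smul_smul] at hbP
        rcases hHP with ⟨hΛ2, rfl⟩ | ⟨hΛ0, hP2, hsub⟩
        · have hm : (m : ℤ) = 2 * k + 1 := by
            rw [hmeq, if_neg (fun h => H.notBoth h hΛ2), if_pos hΛb0]; ring
          have := latt_smul_mem H hΛ2.1 hbP (H.inO_zpow (show (0:ℤ) ≤ α - k by omega))
          rwa [H.zpow_smul_smul, show α - (k : ℤ) + ((k : ℤ) + -α) = 0 from by ring,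
            zpow_zero, one_smul] at this
        · have hm : (m : ℤ) = 2 * k + 2 := by
            rw [hmeq, if_pos hΛ0, if_pos hΛb0]; ring
          have hstep : π • ((π ^ ((k : ℤ) + -α)) • b) ∈ Λ := by
            have hdual : π • ((π ^ ((k : ℤ) + -α)) • b) ∈ dualL σ v P := by
              intro y hy
              rw [herm_smul_left]
              exact H.inO_pi_mul (H.gram2 hP2.2 hbP hy)
            have h3 := dualL_antitone hsub hdual
            rwa [hΛ0.2] at h3
          have hstep' : (π ^ ((1:ℤ) + ((k : ℤ) + -α))) • b ∈ Λ := by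
            rw [← H.zpow_smul_smul, zpow_one]
            exact hstep
          have := latt_smul_mem H hΛ0.1 hstep'
            (H.inO_zpow (show (0:ℤ) ≤ α - 1 - k by omega))
          rwa [H.zpow_smul_smul,
            show α - 1 - (k : ℤ) + (1 + ((k : ℤ) + -α)) = 0 from by ring,
            zpow_zero, one_smul] at this
end
end
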